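/- arXiv:1902.00648 — 10 statements merged into one kernel-verified Lean document; each statement's English description precedes it below -/
import Mathlib

section
/- Let Φ₁ : V → H₁ and Φ₂ : V → H₂ be two feature maps into complex Hilbert spaces, inducing kernels K₁ and K₂, and let γ > 0. Assume there is a linear map T : H₁ → H₂ such that ‖Th‖_{H₂} ≤ γ ‖h‖_{H₁} for all h ∈ H₁ and ⟨h, Φ₁(v)⟩_{H₁} = ⟨Th, Φ₂(v)⟩_{H₂} for all h ∈ H₁ and v ∈ V (i.e., every RKHS function of K₁ lies in the RKHS of K₂ with norm inflated by at most γ, which is the kernel domination condition K₁ ≪ γ² K₂). Then for every complex Borel measure μ on V satisfying the kernel moment condition for both Φ₁ and Φ₂, the mean elements satisfy ‖K₁[μ]‖_{H₁} ≤ γ ‖K₂[μ]‖_{H₂}. -/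
/-!
Writing `m₁ = K₁[μ]`, `m₂ = K₂[μ]`, integrating the identity `⟪h, Φ₁ v⟫ = ⟪T h, Φ₂ v⟫` against `μ`
gives `⟪h, m₁⟫ = ⟪T h, m₂⟫`; taking `h = m₁` and Cauchy–Schwarz yields
`‖m₁‖² ≤ ‖T m₁‖ ‖m₂‖ ≤ γ ‖m₁‖ ‖m₂‖`.
-/

open MeasureTheory

local notation "⟪" x ", " y "⟫" => @inner ℂ _ _ x y

theorem norm_le_mul_norm_of_inner_self_eq_inner {𝕜 E F : Type*} [RCLike 𝕜]
    [NormedAddCommGroup E] [InnerProductSpace 𝕜 E] [NormedAddCommGroup F] [InnerProductSpace 𝕜 F]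
    {x : E} {y z : F} {γ : ℝ} (hγ : 0 ≤ γ) (hz : ‖z‖ ≤ γ * ‖x‖)
    (hxyz : inner 𝕜 x x = inner 𝕜 z y) : ‖x‖ ≤ γ * ‖y‖ := by
  have hsq : ‖x‖ * ‖x‖ ≤ ‖x‖ * (γ * ‖y‖) :=
    calc ‖x‖ * ‖x‖ = ‖inner 𝕜 z y‖ := by rw [← hxyz, ← inner_self_eq_norm_mul_norm (𝕜 := 𝕜), inner_self_re_eq_norm]
      _ ≤ ‖z‖ * ‖y‖ := norm_inner_le_norm z y
      _ ≤ γ * ‖x‖ * ‖y‖ := by gcongr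
      _ = ‖x‖ * (γ * ‖y‖) := by ring
  rcases (norm_nonneg x).eq_or_lt with hx | hx
  · rw [← hx]
    positivity
  · exact le_of_mul_le_mul_left hsq hx

theorem inner_integral_smul_eq_inner_map_integral_smul {V H₁ H₂ : Type*} [MeasurableSpace V]
    [NormedAddCommGroup H₁] [InnerProductSpace ℂ H₁] [CompleteSpace H₁]
    [NormedAddCommGroup H₂] [InnerProductSpace ℂ H₂] [CompleteSpace H₂]
    {Φ₁ : V → H₁} {Φ₂ : V → H₂} {ρ : V → ℂ} {ν : Measure V} (T : H₁ → H₂)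
    (hTΦ : ∀ (h : H₁) (v : V), ⟪h, Φ₁ v⟫ = ⟪T h, Φ₂ v⟫)
    (hi₁ : Integrable (fun v => ρ v • Φ₁ v) ν) (hi₂ : Integrable (fun v => ρ v • Φ₂ v) ν)
    (h : H₁) : ⟪h, ∫ v, ρ v • Φ₁ v ∂ν⟫ = ⟪T h, ∫ v, ρ v • Φ₂ v ∂ν⟫ := by
  rw [← integral_inner hi₁, ← integral_inner hi₂]
  simp only [inner_smul_right, hTΦ h]

theorem stmt_3_general {V H₁ H₂ : Type*} [MeasurableSpace V]
    [NormedAddCommGroup H₁] [InnerProductSpace ℂ H₁] [CompleteSpace H₁]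
    [NormedAddCommGroup H₂] [InnerProductSpace ℂ H₂] [CompleteSpace H₂]
    (Φ₁ : V → H₁) (Φ₂ : V → H₂) (γ : ℝ) (hγ : 0 < γ)
    (T : H₁ →ₗ[ℂ] H₂) (hT : ∀ h : H₁, ‖T h‖ ≤ γ * ‖h‖)
    (hTΦ : ∀ (h : H₁) (v : V), ⟪h, Φ₁ v⟫ = ⟪T h, Φ₂ v⟫)
    (ν : Measure V)
    (ρ : V → ℂ) (hρm : Measurable ρ) (hρ1 : ∀ᵐ v ∂ν, ‖ρ v‖ = 1)
    (hΦ₁m : AEStronglyMeasurable Φ₁ ν) (hΦ₂m : AEStronglyMeasurable Φ₂ ν)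
    (hmom₁ : Integrable (fun v => ‖Φ₁ v‖) ν) (hmom₂ : Integrable (fun v => ‖Φ₂ v‖) ν) :
    ‖∫ v, ρ v • Φ₁ v ∂ν‖ ≤ γ * ‖∫ v, ρ v • Φ₂ v ∂ν‖ := by
  have hρ_le : ∀ᵐ v ∂ν, ‖ρ v‖ ≤ 1 := hρ1.mono fun v hv => hv.le
  have hi₁ : Integrable (fun v => ρ v • Φ₁ v) ν :=
    ((integrable_norm_iff hΦ₁m).1 hmom₁).bdd_smul 1 hρm.aestronglyMeasurable hρ_le
  have hi₂ : Integrable (fun v => ρ v • Φ₂ v) ν :=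
    ((integrable_norm_iff hΦ₂m).1 hmom₂).bdd_smul 1 hρm.aestronglyMeasurable hρ_le
  exact norm_le_mul_norm_of_inner_self_eq_inner hγ.le (hT _)
    (inner_integral_smul_eq_inner_map_integral_smul T hTΦ hi₁ hi₂ _)

/-- **Kernel domination `K₁ ≪ γ² K₂` implies domination of the mean elements.**
The domination is expressed by a linear map `T : H₁ → H₂` with `‖T h‖ ≤ γ‖h‖` and
`⟪h, Φ₁ v⟫ = ⟪T h, Φ₂ v⟫` for all `h, v` (every RKHS function of `K₁` lies in the RKHS of
`K₂` with norm inflated by at most `γ`).  The complex Borel measure `μ = ρ · ν` (polar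
form, `ν = |μ|` finite, `‖ρ‖ = 1` a.e.) satisfies the kernel moment condition for both
feature maps.  Then `‖K₁[μ]‖_{H₁} ≤ γ ‖K₂[μ]‖_{H₂}`. -/
theorem stmt_3 {V H₁ H₂ : Type*} [MeasurableSpace V]
    [NormedAddCommGroup H₁] [InnerProductSpace ℂ H₁] [CompleteSpace H₁]
    [NormedAddCommGroup H₂] [InnerProductSpace ℂ H₂] [CompleteSpace H₂]
    (Φ₁ : V → H₁) (Φ₂ : V → H₂) (γ : ℝ) (hγ : 0 < γ)
    (T : H₁ →ₗ[ℂ] H₂) (hT : ∀ h : H₁, ‖T h‖ ≤ γ * ‖h‖)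
    (hTΦ : ∀ (h : H₁) (v : V), ⟪h, Φ₁ v⟫ = ⟪T h, Φ₂ v⟫)
    (ν : Measure V) [IsFiniteMeasure ν]
    (ρ : V → ℂ) (hρm : Measurable ρ) (hρ1 : ∀ᵐ v ∂ν, ‖ρ v‖ = 1)
    (hΦ₁m : AEStronglyMeasurable Φ₁ ν) (hΦ₂m : AEStronglyMeasurable Φ₂ ν)
    (hmom₁ : Integrable (fun v => ‖Φ₁ v‖) ν) (hmom₂ : Integrable (fun v => ‖Φ₂ v‖) ν) :
    ‖∫ v, ρ v • Φ₁ v ∂ν‖ ≤ γ * ‖∫ v, ρ v • Φ₂ v ∂ν‖ :=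
  stmt_3_general Φ₁ Φ₂ γ hγ T hT hTΦ ν ρ hρm hρ1 hΦ₁m hΦ₂m hmom₁ hmom₂
end

section
/- Let F be a real reproducing kernel Hilbert space of functions on a measurable space X with reproducing kernel k, i.e., k(·,x) ∈ F and ⟨k(·,x), f⟩_F = f(x) for all f ∈ F and x ∈ X. Let Q be a measure on a measurable space V and let φ, φ† : X × V → ℝ be measurable functions such that: (a) φ†(·;v) ∈ F for every v ∈ V; (b) for every x ∈ X, the F-valued map v ↦ φ(x;v) φ†(·;v) is Bochner integrable with respect to Q; and (c) k(x,y) = ∫_V φ(x;v) φ†(y;v) dQ(v) for all x, y ∈ X. Define the pseudo-inverse S†[f] to be the measure with density v ↦ ⟨f, φ†(·;v)⟩_F with respect to Q. Then S† is a right inverse of the model S: for every f ∈ F and every x ∈ X, S[S†[f]](x) := ∫_V φ(x;v) ⟨f, φ†(·;v)⟩_F dQ(v) = f(x). -/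
open MeasureTheory

local notation "⟪" x ", " y "⟫" => @inner ℝ _ _ x y

/-- **A kernel factorization yields a pseudo-inverse of the model `S`.**
The real RKHS `F` of functions on `X` is presented abstractly by its kernel sections
`κ x = k(·,x) ∈ F`, so that `k x y = ⟪κ x, κ y⟫` and the value of `f ∈ F` at `x` is
`⟪κ x, f⟫`; since `F` is a space of functions, elements agreeing at every point coincide
(hypothesis `hsep`).  The function `φ†(·;v) ∈ F` is represented by `ψ v ∈ F`, i.e.
`φ†(x;v) = ⟪κ x, ψ v⟫`.  Assume (b) for every `x` the `F`-valued map
`v ↦ φ(x;v) • φ†(·;v)` is Bochner integrable w.r.t. `Q`, and (c)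
`k(x,y) = ∫ φ(x;v) φ†(y;v) dQ(v)`.  Then `S†[f] := (v ↦ ⟨f, φ†(·;v)⟩_F) · Q` is a right
inverse of `S`: for every `f ∈ F` and `x ∈ X`,
`S[S†[f]](x) = ∫ φ(x;v) ⟨f, φ†(·;v)⟩_F dQ(v) = f(x)`. -/
theorem stmt_7 {X V F : Type*} [MeasurableSpace V]
    [NormedAddCommGroup F] [InnerProductSpace ℝ F] [CompleteSpace F]
    (κ : X → F) (k : X → X → ℝ) (hk : ∀ x y, k x y = ⟪κ x, κ y⟫)
    (hsep : ∀ f g : F, (∀ x, ⟪κ x, f⟫ = ⟪κ x, g⟫) → f = g)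
    (Q : Measure V) (φ φdag : X → V → ℝ) (ψ : V → F)
    (hψ : ∀ x v, φdag x v = ⟪κ x, ψ v⟫)
    (hint : ∀ x, Integrable (fun v => φ x v • ψ v) Q)
    (hfact : ∀ x y, k x y = ∫ v, φ x v * φdag y v ∂Q) :
    ∀ (f : F) (x : X), (∫ v, φ x v * ⟪f, ψ v⟫ ∂Q) = ⟪κ x, f⟫ := by
  intro f x
  have hg : (∫ v, φ x v • ψ v ∂Q) = κ x := by
    apply hsep
    intro y
    have h1 : ⟪κ y, ∫ v, φ x v • ψ v ∂Q⟫ = ∫ v, ⟪κ y, φ x v • ψ v⟫ ∂Q :=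
      (integral_inner (hint x) (κ y)).symm
    rw [h1]
    have : ∀ v, ⟪κ y, φ x v • ψ v⟫ = φ x v * φdag y v := by
      intro v
      rw [inner_smul_right, hψ]
    simp_rw [this]
    rw [← hfact x y, hk x y, real_inner_comm]
  calc (∫ v, φ x v * ⟪f, ψ v⟫ ∂Q) = ∫ v, ⟪f, φ x v • ψ v⟫ ∂Q := by
        simp_rw [inner_smul_right]
    _ = ⟪f, ∫ v, φ x v • ψ v ∂Q⟫ := integral_inner (hint x) f
    _ = ⟪κ x, f⟫ := by rw [hg, real_inner_comm]
end

section
/- Let F be a real reproducing kernel Hilbert space of functions on X with reproducing kernel k, let Q be a measure on V, and let φ, φ† : X × V → ℝ satisfy: (a) φ(·;v) ∈ F for every v ∈ V; (b) for every x ∈ X, the F-valued map v' ↦ φ(x;v') φ†(·;v') is Bochner integrable with respect to Q; and (c) k(x,y) = ∫_V φ(x;v) φ†(y;v) dQ(v) for all x, y ∈ X. Let U(v,v') := ⟨φ(·;v), φ(·;v')⟩_F be the standard F-unitary kernel. Then the mean function under U of the measure with density φ†(x;·) with respect to Q recovers the feature map: for every x ∈ X and v ∈ V, ∫_V U(v,v')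 φ†(x;v') dQ(v') = φ(x;v). -/
open MeasureTheory

local notation "⟪" x ", " y "⟫" => @inner ℝ _ _ x y

/-- **The unitary-kernel mean embedding of the pseudo-inverse density recovers the
feature map.** The real RKHS `F` of functions on `X` is presented by its kernel sections
`κ x = k(·,x) ∈ F` (`k x y = ⟪κ x, κ y⟫`, evaluation `f(x) = ⟪κ x, f⟫`, and elements
agreeing at all points coincide, hypothesis `hsep`).  The functions `φ(·;v) ∈ F` are
represented by `Θ v ∈ F`, i.e. `φ(x;v) = ⟪κ x, Θ v⟫`, and the standard `F`-unitary
kernel is `U(v,v') = ⟪φ(·;v), φ(·;v')⟫_F = ⟪Θ v, Θ v'⟫`.  Assume (b) for every `x`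
the `F`-valued map `v' ↦ φ†(x;v') • φ(·;v')` is Bochner integrable w.r.t. `Q`, and (c)
`k(x,y) = ∫ φ(x;v) φ†(y;v) dQ(v)`.  Then for every `x ∈ X` and `v ∈ V`,
`∫ U(v,v') φ†(x;v') dQ(v') = φ(x;v)`. -/
theorem stmt_8 {X V F : Type*} [MeasurableSpace V]
    [NormedAddCommGroup F] [InnerProductSpace ℝ F] [CompleteSpace F]
    (κ : X → F) (k : X → X → ℝ) (hk : ∀ x y, k x y = ⟪κ x, κ y⟫)
    (hsep : ∀ f g : F, (∀ x, ⟪κ x, f⟫ = ⟪κ x, g⟫) → f = g)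
    (Q : Measure V) (φ φdag : X → V → ℝ) (Θ : V → F)
    (hΘ : ∀ x v, φ x v = ⟪κ x, Θ v⟫)
    (U : V → V → ℝ) (hU : ∀ v v', U v v' = ⟪Θ v, Θ v'⟫)
    (hint : ∀ x, Integrable (fun v' => φdag x v' • Θ v') Q)
    (hfact : ∀ x y, k x y = ∫ v, φ x v * φdag y v ∂Q) :
    ∀ (x : X) (v : V), (∫ v', U v v' * φdag x v' ∂Q) = φ x v := by
  intro x v
  set g : F := ∫ v', φdag x v' • Θ v' ∂Q with hg
  have hgk : g = κ x := by
    apply hsep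
    intro y
    have : ⟪κ y, g⟫ = ∫ v', ⟪κ y, φdag x v' • Θ v'⟫ ∂Q := by
      rw [hg, integral_inner (hint x)]
    rw [this]
    have : (∫ v', ⟪κ y, φdag x v' • Θ v'⟫ ∂Q) = ∫ v', φ y v' * φdag x v' ∂Q := by
      congr 1; funext v'
      rw [inner_smul_right, hΘ y v']; ring
    rw [this, ← hfact, hk, real_inner_comm]
  calc (∫ v', U v v' * φdag x v' ∂Q) = ∫ v', ⟪Θ v, φdag x v' • Θ v'⟫ ∂Q := by
        congr 1; funext v'; rw [inner_smul_right, hU]; ring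
    _ = ⟪Θ v, g⟫ := (integral_inner (hint x) (Θ v))
    _ = φ x v := by rw [hgk, real_inner_comm, ← hΘ]
end

section
/- Let F be a real reproducing kernel Hilbert space of functions on X with reproducing kernel k, and let Φ : V → H be a feature map with kernel K and mean embedding K[·] on a class M of finite signed Borel measures on V satisfying the kernel moment condition. Assume the model S maps M into F and there is a constant c > 0 with ‖S[μ] − S[ν]‖_F ≤ c ‖K[μ] − K[ν]‖_H for all μ, ν ∈ M (continuity of M_K ↪ M_F). Let (x_i, y_i), i = 1,…,n, be data points, let f̂ ∈ F interpolate the data, f̂(x_i) = y_i for all i, and let μ̂ ∈ M satisfy S[μ̂] = f̂. Then for every μ ∈ M and every i, the empirical residual is controlled by the MMD: |S[μ](x_i) − y_i| ≤ √(k(x_i,x_i)) · c · ‖K[μ] − K[μ̂]‖_H. In particular, minimizing the MMD to the empirical mean embedding implicitly performs empirical risk minimization. -/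
open MeasureTheory

local notation "⟪" x ", " y "⟫" => @inner ℝ _ _ x y

/-- **MMD minimization implicitly performs empirical risk minimization.**
The real RKHS `F` of functions on `X` is presented by its kernel sections
`κ x = k(·,x) ∈ F` (`k x y = ⟪κ x, κ y⟫`, evaluation `f(x) = ⟪κ x, f⟫`).
The finite signed Borel measures `μ = ρ · ν` and `μ̂ = ρh · νh` (polar form, total
variation measures finite, densities of modulus one a.e.) satisfy the kernel moment
condition for the feature map `Φ : V → H` with mean embeddings
`K[μ] = ∫ ρ v • Φ v dν` and `K[μ̂] = ∫ ρh v • Φ v dνh`.  The models lie in `F`: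
`Sμ, Sμh ∈ F` with evaluations `⟪κ x, Sμ⟫ = ∫ φ(x;v) dμ(v)` (and similarly for `μ̂`),
and continuity `‖S[μ] − S[μ̂]‖_F ≤ c‖K[μ] − K[μ̂]‖_H` holds.  If `f̂ = S[μ̂]`
interpolates the data, `f̂(xᵢ) = yᵢ`, then every empirical residual of `S[μ]` is
controlled by the MMD: `|S[μ](xᵢ) − yᵢ| ≤ √(k(xᵢ,xᵢ)) · c · ‖K[μ] − K[μ̂]‖_H`. -/
theorem stmt_9 {X V F H : Type*} [MeasurableSpace V]
    [NormedAddCommGroup F] [InnerProductSpace ℝ F] [CompleteSpace F]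
    [NormedAddCommGroup H] [InnerProductSpace ℝ H] [CompleteSpace H]
    (κ : X → F) (k : X → X → ℝ) (hk : ∀ x y, k x y = ⟪κ x, κ y⟫)
    (φ : X → V → ℝ) (Φ : V → H) (hΦm : StronglyMeasurable Φ)
    (ν νh : Measure V) [IsFiniteMeasure ν] [IsFiniteMeasure νh]
    (ρ ρh : V → ℝ) (hρm : Measurable ρ) (hρhm : Measurable ρh)
    (hρ1 : ∀ᵐ v ∂ν, |ρ v| = 1) (hρh1 : ∀ᵐ v ∂νh, |ρh v| = 1)
    (hmom : Integrable (fun v => ‖Φ v‖) ν) (hmomh : Integrable (fun v => ‖Φ v‖) νh)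
    (Sμ Sμh : F)
    (hSμ : ∀ x, ⟪κ x, Sμ⟫ = ∫ v, ρ v * φ x v ∂ν)
    (hSμh : ∀ x, ⟪κ x, Sμh⟫ = ∫ v, ρh v * φ x v ∂νh)
    (c : ℝ) (hc : 0 < c)
    (hcont : ‖Sμ - Sμh‖ ≤ c * ‖(∫ v, ρ v • Φ v ∂ν) - (∫ v, ρh v • Φ v ∂νh)‖)
    (n : ℕ) (x : Fin n → X) (y : Fin n → ℝ)
    (hinterp : ∀ i, ⟪κ (x i), Sμh⟫ = y i) :
    ∀ i : Fin n, |(∫ v, ρ v * φ (x i) v ∂ν) - y i| ≤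
      Real.sqrt (k (x i) (x i)) * (c * ‖(∫ v, ρ v • Φ v ∂ν) - (∫ v, ρh v • Φ v ∂νh)‖) := by
  intro i
  rw [← hSμ (x i), ← hinterp i, ← inner_sub_right]
  calc |⟪κ (x i), Sμ - Sμh⟫| ≤ ‖κ (x i)‖ * ‖Sμ - Sμh‖ := abs_real_inner_le_norm _ _
    _ ≤ Real.sqrt (k (x i) (x i)) * (c * ‖(∫ v, ρ v • Φ v ∂ν) - (∫ v, ρh v • Φ v ∂νh)‖) := by
        have hκ : ‖κ (x i)‖ = Real.sqrt (k (x i) (x i)) := by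
          rw [hk, real_inner_self_eq_norm_sq, Real.sqrt_sq (norm_nonneg _)]
        rw [hκ]
        exact mul_le_mul_of_nonneg_left hcont (Real.sqrt_nonneg _)
end

section
/- Let H be a real Hilbert space, let D ⊆ H be a closed convex set contained in the closed ball of radius λ centered at the origin, and suppose the closed ball of radius δ > 0 centered at h° ∈ D is contained in D. Consider the conditional gradient iterates with exact line search: starting from h₁ ∈ D, for j = 1, …, p choose s_j ∈ D with ⟨s_j, h_j − h°⟩ = min_{s ∈ D} ⟨s, h_j − h°⟩, set η_j := min{ ⟨h_j − h°, h_j − s_j⟩ / ‖h_j − s_j‖², 1 } (with η_j := 1 if h_j = s_j), and h_{j+1} := h_j + η_j (s_j − h_j). Then the objective converges linearly: (1/2) ‖h_p − h°‖² ≤ 4λ² exp( − p δ² / (4λ²) ). -/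
open scoped Classical

local notation "⟪" x ", " y "⟫" => @inner ℝ _ _ x y

/-!
Write `r = ‖h_j - h°‖` and `g = ⟪h_j - h°, h_j - s_j⟫` for the duality gap. Since `D` contains the
ball of radius `δ` around `h°`, the linear minimizer `s_j` does at least as well as the point
`h° - δ (h_j - h°) / r`, which gives `g ≥ r² + δ r`. Exact line search decreases `r²` by at least
`min (g, g² / ‖h_j - s_j‖²)`, and as `‖h_j - s_j‖ ≤ 2λ` both terms are at least `c r²` with
`c = δ² / (4λ²) ≤ 1/4`. Hence `r²` contracts by the factor `1 - c ≤ exp (-c)` at every step.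
-/

open Metric Set

lemma le_of_closedBall_subset_closedBall {E : Type*} [NormedAddCommGroup E] [NormedSpace ℝ E]
    [Nontrivial E] {x y : E} {r R : ℝ} (hr : 0 ≤ r) (h : closedBall x r ⊆ closedBall y R) :
    r ≤ R := by
  have hR : 0 ≤ R := dist_nonneg.trans (h (mem_closedBall_self hr))
  have hdiam : 2 * r ≤ 2 * R :=
    (diam_closedBall_eq x hr).symm.le.trans ((diam_mono h isBounded_closedBall).trans
      (diam_closedBall hR))
  linarith

lemma one_sub_pow_le_two_mul_exp {c : ℝ} (hc : c ≤ 1 / 2) (k : ℕ) :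
    (1 - c) ^ k ≤ 2 * Real.exp (-(c * (k + 1))) :=
  calc (1 - c) ^ k ≤ 2 * (1 - c) ^ (k + 1) := by
        rw [pow_succ]; nlinarith [pow_nonneg (by linarith : (0 : ℝ) ≤ 1 - c) k]
    _ ≤ 2 * Real.exp (-c) ^ (k + 1) := by
        gcongr
        · linarith
        · exact Real.one_sub_le_exp_neg c
    _ = 2 * Real.exp (-(c * (k + 1))) := by
        rw [← Real.exp_nat_mul]; push_cast; ring_nf

section FrankWolfe

variable {H : Type*} [NormedAddCommGroup H] [InnerProductSpace ℝ H]

/-- Minimizes `t ↦ ‖x + t • (s - x) - ho‖²` over `[0, 1]` whenever `0 ≤ ⟪x - ho, x - s⟫`. -/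
noncomputable def exactLineSearch (ho x s : H) : ℝ :=
  if x = s then 1 else min (⟪x - ho, x - s⟫ / ‖x - s‖ ^ 2) 1

lemma inner_le_inner_sub_mul_norm_of_closedBall_subset {D : Set H} {c s w : H} {δ : ℝ}
    (hδ : 0 ≤ δ) (hball : closedBall c δ ⊆ D) (hmin : ∀ u ∈ D, ⟪s, w⟫ ≤ ⟪u, w⟫) :
    ⟪s, w⟫ ≤ ⟪c, w⟫ - δ * ‖w‖ := by
  rcases eq_or_ne w 0 with rfl | hw
  · simp
  have hw : ‖w‖ ≠ 0 := norm_ne_zero_iff.2 hw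
  have hu : c - (δ / ‖w‖) • w ∈ D := hball <| by
    rw [mem_closedBall, dist_eq_norm, sub_sub_cancel_left, norm_neg, norm_smul, norm_div,
      norm_norm, Real.norm_of_nonneg hδ, div_mul_cancel₀ _ hw]
  calc ⟪s, w⟫ ≤ ⟪c - (δ / ‖w‖) • w, w⟫ := hmin _ hu
    _ = ⟪c, w⟫ - δ * ‖w‖ := by
        rw [inner_sub_left, real_inner_smul_left, real_inner_self_eq_norm_sq]
        field_simp

lemma norm_sub_sq_add_mul_norm_le_inner {D : Set H} {ho x s : H} {δ : ℝ} (hδ : 0 ≤ δ)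
    (hball : closedBall ho δ ⊆ D) (hmin : ∀ u ∈ D, ⟪s, x - ho⟫ ≤ ⟪u, x - ho⟫) :
    ‖x - ho‖ ^ 2 + δ * ‖x - ho‖ ≤ ⟪x - ho, x - s⟫ := by
  have hs := inner_le_inner_sub_mul_norm_of_closedBall_subset hδ hball hmin
  have hsplit : ⟪x - ho, x - s⟫ = ‖x - ho‖ ^ 2 + (⟪ho, x - ho⟫ - ⟪s, x - ho⟫) := by
    rw [← real_inner_self_eq_norm_sq, ← inner_sub_left, real_inner_comm (x - ho) (ho - s),
      ← inner_add_right]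
    congr 1; abel
  linarith

lemma exactLineSearch_mem_Icc {ho x s : H} (hg : 0 ≤ ⟪x - ho, x - s⟫) :
    exactLineSearch ho x s ∈ Icc 0 1 := by
  unfold exactLineSearch
  split_ifs
  · exact right_mem_Icc.2 zero_le_one
  · exact ⟨le_min (by positivity) zero_le_one, min_le_right _ _⟩

lemma norm_add_exactLineSearch_smul_sub_sq_le (ho x s : H) :
    ‖x + exactLineSearch ho x s • (s - x) - ho‖ ^ 2 ≤
      ‖x - ho‖ ^ 2 - min ⟪x - ho, x - s⟫ (⟪x - ho, x - s⟫ ^ 2 / ‖x - s‖ ^ 2) := by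
  set g := ⟪x - ho, x - s⟫
  have hexpand : ∀ t : ℝ,
      ‖x + t • (s - x) - ho‖ ^ 2 = ‖x - ho‖ ^ 2 - 2 * t * g + t ^ 2 * ‖x - s‖ ^ 2 := by
    intro t
    rw [show x + t • (s - x) - ho = (x - ho) - t • (x - s) by module, norm_sub_sq_real,
      real_inner_smul_right, norm_smul, Real.norm_eq_abs, mul_pow, sq_abs]
    ring
  unfold exactLineSearch
  split_ifs with hxs
  · simp [g, hxs]
  · have hd : 0 < ‖x - s‖ ^ 2 := by
      have : x - s ≠ 0 := sub_ne_zero.2 hxs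
      positivity
    rw [hexpand]
    rcases le_total (g / ‖x - s‖ ^ 2) 1 with hle | hle
    · have hmin := min_le_right g (g ^ 2 / ‖x - s‖ ^ 2)
      rw [min_eq_left hle]
      have hsq : g ^ 2 / ‖x - s‖ ^ 2 = g / ‖x - s‖ ^ 2 * g := by ring
      have hquad : (g / ‖x - s‖ ^ 2) ^ 2 * ‖x - s‖ ^ 2 = g / ‖x - s‖ ^ 2 * g := by
        field_simp
      linarith
    · have hmin := min_le_left g (g ^ 2 / ‖x - s‖ ^ 2)
      rw [min_eq_right hle]
      rw [le_div_iff₀ hd, one_mul] at hle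
      linarith

variable {D : Set H} {ho x s : H} {δ lam : ℝ}

lemma add_exactLineSearch_smul_sub_mem (hD : Convex ℝ D) (hδ : 0 ≤ δ)
    (hball : closedBall ho δ ⊆ D) (hx : x ∈ D) (hs : s ∈ D)
    (hmin : ∀ u ∈ D, ⟪s, x - ho⟫ ≤ ⟪u, x - ho⟫) :
    x + exactLineSearch ho x s • (s - x) ∈ D :=
  hD.add_smul_sub_mem hx hs <| exactLineSearch_mem_Icc <|
    (by positivity : (0 : ℝ) ≤ ‖x - ho‖ ^ 2 + δ * ‖x - ho‖).trans
      (norm_sub_sq_add_mul_norm_le_inner hδ hball hmin)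

lemma norm_add_exactLineSearch_smul_sub_sq_le_mul (hδ : 0 ≤ δ) (hδlam : δ ≤ lam)
    (hD : D ⊆ closedBall 0 lam) (hball : closedBall ho δ ⊆ D) (hx : x ∈ D) (hs : s ∈ D)
    (hmin : ∀ u ∈ D, ⟪s, x - ho⟫ ≤ ⟪u, x - ho⟫) :
    ‖x + exactLineSearch ho x s • (s - x) - ho‖ ^ 2 ≤
      (1 - δ ^ 2 / (4 * lam ^ 2)) * ‖x - ho‖ ^ 2 := by
  set r := ‖x - ho‖
  set g := ⟪x - ho, x - s⟫
  set c := δ ^ 2 / (4 * lam ^ 2)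
  have hgap : r ^ 2 + δ * r ≤ g := norm_sub_sq_add_mul_norm_le_inner hδ hball hmin
  have hc : c ≤ 1 := div_le_one_of_le₀ (by nlinarith) (by positivity)
  have hδr : 0 ≤ δ * r := by positivity
  have hcr : c * r ^ 2 ≤ r ^ 2 := mul_le_of_le_one_left (by positivity) hc
  have hdist : ‖x - s‖ ≤ 2 * lam :=
    (norm_sub_le_of_le (mem_closedBall_zero_iff.1 (hD hx))
      (mem_closedBall_zero_iff.1 (hD hs))).trans_eq (two_mul lam).symm
  have hgap_sq : c * r ^ 2 ≤ g ^ 2 / ‖x - s‖ ^ 2 := by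
    rcases (norm_nonneg (x - s)).eq_or_lt with hd | hd
    · have hg : g = 0 := by simp [g, norm_eq_zero.1 hd.symm]
      rw [← hd, hg, zero_pow two_ne_zero, div_zero]
      linarith
    · calc c * r ^ 2 = (δ * r) ^ 2 / (2 * lam) ^ 2 := by simp only [c]; ring
        _ ≤ g ^ 2 / ‖x - s‖ ^ 2 := by
          gcongr
          nlinarith
  have hdecrease : _ ≤ r ^ 2 - min g (g ^ 2 / ‖x - s‖ ^ 2) :=
    norm_add_exactLineSearch_smul_sub_sq_le ho x s
  have hmin_ge : c * r ^ 2 ≤ min g (g ^ 2 / ‖x - s‖ ^ 2) :=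
    le_min (hcr.trans (by linarith)) hgap_sq
  linarith

lemma norm_frankWolfe_sub_sq_le (hDconv : Convex ℝ D) (hδ : 0 ≤ δ) (hδlam : δ ≤ lam)
    (hD : D ⊆ closedBall 0 lam) (hball : closedBall ho δ ⊆ D) {h s : ℕ → H} (hinit : h 1 ∈ D)
    (hsD : ∀ j, 1 ≤ j → s j ∈ D)
    (hsmin : ∀ j, 1 ≤ j → ∀ u ∈ D, ⟪s j, h j - ho⟫ ≤ ⟪u, h j - ho⟫)
    (hstep : ∀ j, 1 ≤ j → h (j + 1) = h j + exactLineSearch ho (h j) (s j) • (s j - h j))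
    (k : ℕ) :
    ‖h (k + 1) - ho‖ ^ 2 ≤ (1 - δ ^ 2 / (4 * lam ^ 2)) ^ k * ‖h 1 - ho‖ ^ 2 := by
  have hmem : ∀ j, 1 ≤ j → h j ∈ D := by
    intro j hj
    induction j, hj using Nat.le_induction with
    | base => exact hinit
    | succ j hj ih =>
      rw [hstep j hj]
      exact add_exactLineSearch_smul_sub_mem hDconv hδ hball ih (hsD j hj) (hsmin j hj)
  have hq : 0 ≤ 1 - δ ^ 2 / (4 * lam ^ 2) :=
    sub_nonneg.2 (div_le_one_of_le₀ (by nlinarith) (by positivity))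
  refine le_geom (u := fun i ↦ ‖h (i + 1) - ho‖ ^ 2) hq k fun i _ ↦ ?_
  simpa only [hstep (i + 1) (by omega)] using
    norm_add_exactLineSearch_smul_sub_sq_le_mul hδ hδlam hD hball
      (hmem (i + 1) (by omega)) (hsD (i + 1) (by omega)) (hsmin (i + 1) (by omega))

end FrankWolfe

theorem stmt_12_general {H : Type*} [NormedAddCommGroup H] [InnerProductSpace ℝ H]
    (D : Set H) (hDconv : Convex ℝ D)
    (lam δ : ℝ) (hδ : 0 < δ)
    (hDball : D ⊆ Metric.closedBall (0 : H) lam)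
    (ho : H) (hint : Metric.closedBall ho δ ⊆ D)
    (h s : ℕ → H) (η : ℕ → ℝ) (hinit : h 1 ∈ D)
    (hsD : ∀ j, 1 ≤ j → s j ∈ D)
    (hsmin : ∀ j, 1 ≤ j → ∀ u ∈ D, ⟪s j, h j - ho⟫ ≤ ⟪u, h j - ho⟫)
    (hη : ∀ j, 1 ≤ j → η j =
      if h j = s j then 1 else min (⟪h j - ho, h j - s j⟫ / ‖h j - s j‖ ^ 2) 1)
    (hupd : ∀ j, 1 ≤ j → h (j + 1) = h j + η j • (s j - h j))
    (p : ℕ) (hp : 1 ≤ p) :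
    (1 / 2 : ℝ) * ‖h p - ho‖ ^ 2 ≤
      4 * lam ^ 2 * Real.exp (-(p : ℝ) * δ ^ 2 / (4 * lam ^ 2)) := by
  rcases subsingleton_or_nontrivial H with hH | hH
  · rw [Subsingleton.elim (h p) ho, sub_self, norm_zero, zero_pow two_ne_zero, mul_zero]
    positivity
  have hδlam : δ ≤ lam := le_of_closedBall_subset_closedBall hδ.le (hint.trans hDball)
  have hstep : ∀ j, 1 ≤ j → h (j + 1) = h j + exactLineSearch ho (h j) (s j) • (s j - h j) :=
    fun j hj ↦ (hupd j hj).trans (by rw [hη j hj]; rfl)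
  set c := δ ^ 2 / (4 * lam ^ 2)
  have hc : c ≤ 1 / 4 := by
    rw [div_le_iff₀ (by nlinarith)]; nlinarith
  obtain ⟨k, rfl⟩ := Nat.exists_eq_add_of_le' hp
  have hinit_dist : ‖h 1 - ho‖ ≤ 2 * lam :=
    (norm_sub_le_of_le (mem_closedBall_zero_iff.1 (hDball hinit))
      (mem_closedBall_zero_iff.1 (hDball (hint (mem_closedBall_self hδ.le))))).trans_eq
      (two_mul lam).symm
  calc (1 / 2 : ℝ) * ‖h (k + 1) - ho‖ ^ 2
      ≤ (1 / 2) * ((1 - c) ^ k * (2 * lam) ^ 2) := by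
        gcongr
        exact (norm_frankWolfe_sub_sq_le hDconv hδ.le hδlam hDball hint hinit hsD hsmin hstep
          k).trans <| mul_le_mul_of_nonneg_left (pow_le_pow_left₀ (norm_nonneg _) hinit_dist 2)
          (pow_nonneg (by linarith) k)
    _ ≤ (1 / 2) * (2 * Real.exp (-(c * (k + 1))) * (2 * lam) ^ 2) := by
        gcongr
        exact one_sub_pow_le_two_mul_exp (by linarith) k
    _ = 4 * lam ^ 2 * Real.exp (-((k + 1 : ℕ) : ℝ) * δ ^ 2 / (4 * lam ^ 2)) := by
        simp only [c]; push_cast; ring_nf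

/-- **Linear convergence `O(e^{-p})` of the conditional gradient with exact line search
when the optimum lies in the strict interior.** Let `D` be a closed convex subset of the
closed ball of radius `lam` centered at the origin of a real Hilbert space, and assume the
closed ball of radius `δ > 0` centered at `h° ∈ D` is contained in `D`.  The conditional
gradient iterates for `J(h) = (1/2)‖h − h°‖²` start at `h 1 ∈ D` and, for `j = 1, 2, …`,
pick a vertex `s j ∈ D` minimizing `s ↦ ⟪s, h j − h°⟫` over `D`, the exact line-search
step size `η_j = min{⟪h j − h°, h j − s j⟫/‖h j − s j‖², 1}` (with `η_j = 1` when
`h j = s j`), and update `h (j+1) = h j + η_j • (s j − h j)`.  Then the objective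
converges linearly: `(1/2)‖h p − h°‖² ≤ 4 lam² exp(−p δ²/(4 lam²))`. -/
theorem stmt_12 {H : Type*} [NormedAddCommGroup H] [InnerProductSpace ℝ H] [CompleteSpace H]
    (D : Set H) (hDconv : Convex ℝ D) (hDcl : IsClosed D)
    (lam δ : ℝ) (hδ : 0 < δ)
    (hDball : D ⊆ Metric.closedBall (0 : H) lam)
    (ho : H) (hho : ho ∈ D) (hint : Metric.closedBall ho δ ⊆ D)
    (h s : ℕ → H) (η : ℕ → ℝ) (hinit : h 1 ∈ D)
    (hsD : ∀ j, 1 ≤ j → s j ∈ D)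
    (hsmin : ∀ j, 1 ≤ j → ∀ u ∈ D, ⟪s j, h j - ho⟫ ≤ ⟪u, h j - ho⟫)
    (hη : ∀ j, 1 ≤ j → η j =
      if h j = s j then 1 else min (⟪h j - ho, h j - s j⟫ / ‖h j - s j‖ ^ 2) 1)
    (hupd : ∀ j, 1 ≤ j → h (j + 1) = h j + η j • (s j - h j))
    (p : ℕ) (hp : 1 ≤ p) :
    (1 / 2 : ℝ) * ‖h p - ho‖ ^ 2 ≤
      4 * lam ^ 2 * Real.exp (-(p : ℝ) * δ ^ 2 / (4 * lam ^ 2)) :=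
  stmt_12_general D hDconv lam δ hδ hDball ho hint h s η hinit hsD hsmin hη hupd p hp
end

section
/- Let D be a closed convex bounded subset of a real Hilbert space, let g : D → ℝ be convex and Fréchet differentiable with gradient ∇g, and define the curvature constant C_g := sup { (2/η²) ( g(x + η(u − x)) − g(x) − η ⟨∇g(x), u − x⟩ ) : x, u ∈ D, η ∈ (0,1] }. If ∇g is L-Lipschitz on D, i.e., ‖∇g(x) − ∇g(y)‖ ≤ L ‖x − y‖ for all x, y ∈ D, then C_g ≤ diam(D)² L, where diam(D) := sup_{a,b ∈ D} ‖a − b‖. -/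
/-!
Along the segment `t ↦ x + t • v` with `v = η • (u - x)`, the function
`t ↦ g (x + t • v) - g x - t ⟪∇g(x), v⟫` vanishes at `0` and has derivative
`⟪∇g(x + t • v) - ∇g(x), v⟫ ≤ L t ‖v‖²`, so comparing it with `L t² ‖v‖² / 2` gives the descent
lemma `g y ≤ g x + ⟪∇g(x), y - x⟫ + L ‖y - x‖² / 2`. With `‖v‖ = η ‖u - x‖` and
`‖u - x‖ ≤ diam D` this bounds each term of the curvature constant by `L diam(D)²`; a negative
`L` is only possible when `D` has at most one point.
-/

local notation "⟪" x ", " y "⟫" => @inner ℝ _ _ x y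

section

variable {H : Type*} [NormedAddCommGroup H] [InnerProductSpace ℝ H] [CompleteSpace H]

theorem HasGradientAt.hasDerivAt_comp_add_smul {g : H → ℝ} {g' x v : H} {t : ℝ}
    (h : HasGradientAt g g' (x + t • v)) :
    HasDerivAt (fun s : ℝ => g (x + s • v)) ⟪g', v⟫ t := by
  have hline : HasDerivAt (fun s : ℝ => x + s • v) v t := by
    simpa using ((hasDerivAt_id t).smul_const v).const_add x
  simpa [InnerProductSpace.toDual_apply_apply, Function.comp_def] using
    h.hasFDerivAt.comp_hasDerivAt t hline

theorem Convex.image_sub_sub_inner_gradient_le {s : Set H} (hs : Convex ℝ s) {g : H → ℝ}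
    {g' : H → H} (hdiff : ∀ z ∈ s, HasGradientAt g (g' z) z) {L : ℝ}
    (hLip : ∀ z ∈ s, ∀ w ∈ s, ‖g' z - g' w‖ ≤ L * ‖z - w‖) {x y : H} (hx : x ∈ s) (hy : y ∈ s) :
    g y - g x - ⟪g' x, y - x⟫ ≤ L / 2 * ‖y - x‖ ^ 2 := by
  set v := y - x
  have hseg : ∀ t ∈ Set.Icc (0 : ℝ) 1, x + t • v ∈ s := fun t ht =>
    hs.add_smul_sub_mem hx hy ht
  have hderiv : ∀ t ∈ Set.Icc (0 : ℝ) 1, HasDerivAt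
      (fun s : ℝ => g (x + s • v) - g x - s * ⟪g' x, v⟫) (⟪g' (x + t • v), v⟫ - ⟪g' x, v⟫) t :=
    fun t ht => (((hdiff _ (hseg t ht)).hasDerivAt_comp_add_smul).sub_const (g x)).sub
      (hasDerivAt_mul_const ⟪g' x, v⟫)
  have hbound : ∀ t ∈ Set.Ico (0 : ℝ) 1,
      ⟪g' (x + t • v), v⟫ - ⟪g' x, v⟫ ≤ L * ‖v‖ ^ 2 * t := fun t ht =>
    calc ⟪g' (x + t • v), v⟫ - ⟪g' x, v⟫ = ⟪g' (x + t • v) - g' x, v⟫ := (inner_sub_left ..).symm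
      _ ≤ ‖g' (x + t • v) - g' x‖ * ‖v‖ := real_inner_le_norm _ _
      _ ≤ L * ‖x + t • v - x‖ * ‖v‖ := by
          gcongr; exact hLip _ (hseg t (Set.Ico_subset_Icc_self ht)) _ hx
      _ = L * ‖v‖ ^ 2 * t := by
          rw [add_sub_cancel_left, norm_smul, Real.norm_of_nonneg ht.1]; ring
  have hquad : ∀ t : ℝ, HasDerivAt (fun s : ℝ => L / 2 * ‖v‖ ^ 2 * s ^ 2) (L * ‖v‖ ^ 2 * t) t :=
    fun t => ((hasDerivAt_pow 2 t).const_mul (L / 2 * ‖v‖ ^ 2)).congr_deriv (by ring)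
  have := image_le_of_deriv_right_le_deriv_boundary
    (fun t ht => (hderiv t ht).continuousAt.continuousWithinAt)
    (fun t ht => (hderiv t (Set.Ico_subset_Icc_self ht)).hasDerivWithinAt)
    (by simp) (fun t _ => (hquad t).continuousAt.continuousWithinAt)
    (fun t _ => (hquad t).hasDerivWithinAt) hbound (Set.right_mem_Icc.2 zero_le_one)
  simpa [v] using this

theorem Convex.curvature_quotient_le {s : Set H} (hs : Convex ℝ s) {g : H → ℝ}
    {g' : H → H} (hdiff : ∀ z ∈ s, HasGradientAt g (g' z) z) {L : ℝ}
    (hLip : ∀ z ∈ s, ∀ w ∈ s, ‖g' z - g' w‖ ≤ L * ‖z - w‖) {x u : H} (hx : x ∈ s) (hu : u ∈ s)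
    {η : ℝ} (hη : η ∈ Set.Ioc (0 : ℝ) 1) :
    (2 / η ^ 2) * (g (x + η • (u - x)) - g x - η * ⟪g' x, u - x⟫) ≤ L * ‖u - x‖ ^ 2 := by
  have hy : x + η • (u - x) ∈ s := hs.add_smul_sub_mem hx hu ⟨hη.1.le, hη.2⟩
  have hdescent := hs.image_sub_sub_inner_gradient_le hdiff hLip hx hy
  rw [add_sub_cancel_left, real_inner_smul_right, norm_smul, Real.norm_of_nonneg hη.1.le,
    mul_pow] at hdescent
  calc (2 / η ^ 2) * (g (x + η • (u - x)) - g x - η * ⟪g' x, u - x⟫)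
      ≤ (2 / η ^ 2) * (L / 2 * (η ^ 2 * ‖u - x‖ ^ 2)) := by gcongr
    _ = L * ‖u - x‖ ^ 2 := by field_simp [hη.1.ne']

end

theorem Set.subsingleton_of_norm_sub_le_mul_norm_sub {E F : Type*} [NormedAddCommGroup E]
    [SeminormedAddCommGroup F] {s : Set E} {f : E → F} {L : ℝ} (hL : L < 0)
    (hf : ∀ z ∈ s, ∀ w ∈ s, ‖f z - f w‖ ≤ L * ‖z - w‖) : s.Subsingleton := by
  intro z hz w hw
  have hzw : 0 ≤ L * ‖z - w‖ := (norm_nonneg _).trans (hf z hz w hw)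
  have : ‖z - w‖ = 0 := le_antisymm (nonpos_of_mul_nonneg_right hzw hL) (norm_nonneg _)
  exact sub_eq_zero.1 (norm_eq_zero.1 this)

theorem stmt_13_general {H : Type*} [NormedAddCommGroup H] [InnerProductSpace ℝ H] [CompleteSpace H]
    (D : Set H) (hDconv : Convex ℝ D) (hDbdd : Bornology.IsBounded D)
    (g : H → ℝ)
    (g' : H → H) (hdiff : ∀ x ∈ D, HasGradientAt g (g' x) x)
    (L : ℝ) (hLip : ∀ x ∈ D, ∀ y ∈ D, ‖g' x - g' y‖ ≤ L * ‖x - y‖) :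
    ∀ x ∈ D, ∀ u ∈ D, ∀ η ∈ Set.Ioc (0 : ℝ) 1,
      (2 / η ^ 2) * (g (x + η • (u - x)) - g x - η * ⟪g' x, u - x⟫) ≤
        Metric.diam D ^ 2 * L := by
  intro x hx u hu η hη
  refine (hDconv.curvature_quotient_le hdiff hLip hx hu hη).trans ?_
  rcases le_or_gt 0 L with hL | hL
  · rw [mul_comm]
    gcongr
    simpa [dist_eq_norm] using Metric.dist_le_diam_of_mem hDbdd hu hx
  · have hsub := Set.subsingleton_of_norm_sub_le_mul_norm_sub hL hLip
    simp [hsub hu hx, Metric.diam_subsingleton hsub]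

/-- **Estimate of the curvature constant by the Lipschitz constant of the gradient.**
Let `D` be a closed convex bounded subset of a real Hilbert space, let `g` be convex on
`D` and Fréchet differentiable with gradient `∇g = g'` at every point of `D`, and assume
`∇g` is `L`-Lipschitz on `D`.  Then every term of the supremum defining the curvature
constant `C_g = sup {(2/η²)(g(x + η(u−x)) − g(x) − η⟪∇g(x), u−x⟫) : x, u ∈ D, η ∈ (0,1]}`
is bounded by `diam(D)² L`, i.e. `C_g ≤ diam(D)² L`. -/
theorem stmt_13 {H : Type*} [NormedAddCommGroup H] [InnerProductSpace ℝ H] [CompleteSpace H]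
    (D : Set H) (hDconv : Convex ℝ D) (hDcl : IsClosed D) (hDbdd : Bornology.IsBounded D)
    (g : H → ℝ) (hg : ConvexOn ℝ D g)
    (g' : H → H) (hdiff : ∀ x ∈ D, HasGradientAt g (g' x) x)
    (L : ℝ) (hLip : ∀ x ∈ D, ∀ y ∈ D, ‖g' x - g' y‖ ≤ L * ‖x - y‖) :
    ∀ x ∈ D, ∀ u ∈ D, ∀ η ∈ Set.Ioc (0 : ℝ) 1,
      (2 / η ^ 2) * (g (x + η • (u - x)) - g x - η * ⟪g' x, u - x⟫) ≤
        Metric.diam D ^ 2 * L :=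
  stmt_13_general D hDconv hDbdd g g' hdiff L hLip
end

section
/- (Barron's bound / Maurey–Jones–Barron.) Let P be a σ-finite measure on X ⊆ ℝ^m, let φ : X × V → ℝ with V ⊆ ℝ^d be such that G := { φ(·;v) : v ∈ V } is a bounded subset of L²(P) with C := sup_{g ∈ G} ‖g‖_{L²(P)} < ∞, and let μ be a finite complex Borel measure on V with total variation norm ‖μ‖_{TV} := |μ|(V). Let f := S[μ] := ∫_V φ(·;v) dμ(v), which satisfies ‖f‖_{L²(P)} ≤ C ‖μ‖_{TV}. Then for every p ∈ ℕ, the L²(P)-distance from f to the set of p-term linear combinations of elements of G satisfies dist_{L²(P)}(f, span_p G) ≤ √( (C² ‖μ‖_{TV}² − ‖f‖_{L²(P)}²) / p ), where span_p G := { Σ_{j=1}^p w_j g_j : w_j ∈ ℂ, g_j ∈ G }. -/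
open MeasureTheory
open scoped InnerProductSpace

/-! Maurey's empirical method, derandomised. After normalising `ν` to a probability measure `Q`,
`f / ν(V)` is the `Q`-mean `m` of `g = ρ • Φ`, and for every `a` the `Q`-average of
`‖a + (g v - m)‖²` is `‖a‖² + (E‖g‖² - ‖m‖²) ≤ ‖a‖² + (C² - ‖m‖²)`, so some `v` does no worse
than the average. Choosing `p` points greedily in this way gives
`‖∑ g(vⱼ) - p • m‖² ≤ p (C² - ‖m‖²)`, and rescaling by `ν(V) / p` yields an element of `span_p G`
within the stated distance of `f`. -/

section Maurey

variable {H α : Type*} [NormedAddCommGroup H] [NormedSpace ℝ H] [CompleteSpace H]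
  [MeasurableSpace α] {Q : Measure α} [IsProbabilityMeasure Q] {g : α → H}

theorem integral_norm_add_sub_integral_sq (𝕜 : Type*) [RCLike 𝕜] [InnerProductSpace 𝕜 H]
    (hg : MemLp g 2 Q) (a : H) :
    ∫ v, ‖a + (g v - ∫ w, g w ∂Q)‖ ^ 2 ∂Q
      = ‖a‖ ^ 2 + ((∫ v, ‖g v‖ ^ 2 ∂Q) - ‖∫ v, g v ∂Q‖ ^ 2) := by
  set m := ∫ v, g v ∂Q
  have hg1 : Integrable g Q := hg.integrable one_le_two
  have hexpand (v : α) : ‖a + (g v - m)‖ ^ 2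
      = ‖a - m‖ ^ 2 + 2 * RCLike.re ⟪a - m, g v⟫_𝕜 + ‖g v‖ ^ 2 := by
    rw [← norm_add_sq (𝕜 := 𝕜)]
    congr 2
    abel
  have hcenter : ‖a - m‖ ^ 2 + 2 * RCLike.re ⟪a - m, m⟫_𝕜 = ‖a‖ ^ 2 - ‖m‖ ^ 2 := by
    have := norm_add_sq (𝕜 := 𝕜) (a - m) m
    rw [sub_add_cancel] at this
    linarith
  have hinner : Integrable (fun v => 2 * RCLike.re ⟪a - m, g v⟫_𝕜) Q :=
    (hg1.const_inner _).re.const_mul 2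
  have hconst_add : Integrable (fun v => ‖a - m‖ ^ 2 + 2 * RCLike.re ⟪a - m, g v⟫_𝕜) Q :=
    (integrable_const _).add hinner
  simp_rw [hexpand]
  rw [integral_add hconst_add (hg.integrable_norm_pow (p := 2) two_ne_zero),
    integral_add (integrable_const _) hinner, integral_const_mul,
    integral_re (hg1.const_inner _), integral_inner hg1]
  simp only [integral_const, probReal_univ, one_smul]
  linarith

theorem exists_norm_add_sub_integral_sq_le (𝕜 : Type*) [RCLike 𝕜] [InnerProductSpace 𝕜 H]
    (hg : MemLp g 2 Q) (a : H) :
    ∃ v, ‖a + (g v - ∫ w, g w ∂Q)‖ ^ 2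
      ≤ ‖a‖ ^ 2 + ((∫ v, ‖g v‖ ^ 2 ∂Q) - ‖∫ v, g v ∂Q‖ ^ 2) := by
  rw [← integral_norm_add_sub_integral_sq 𝕜 hg a]
  refine exists_le_integral ?_
  exact ((memLp_const a).add (hg.sub (memLp_const _))).integrable_norm_pow two_ne_zero

theorem exists_norm_sum_sub_nsmul_integral_sq_le (𝕜 : Type*) [RCLike 𝕜] [InnerProductSpace 𝕜 H]
    (hg : MemLp g 2 Q) (n : ℕ) :
    ∃ v : Fin n → α, ‖∑ j, g (v j) - n • ∫ w, g w ∂Q‖ ^ 2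
      ≤ n * ((∫ w, ‖g w‖ ^ 2 ∂Q) - ‖∫ w, g w ∂Q‖ ^ 2) := by
  induction n with
  | zero => simp
  | succ n ih =>
    obtain ⟨v, hv⟩ := ih
    obtain ⟨w, hw⟩ := exists_norm_add_sub_integral_sq_le 𝕜 hg (∑ j, g (v j) - n • ∫ w, g w ∂Q)
    refine ⟨Fin.snoc v w, ?_⟩
    have hsum : ∑ j, g (Fin.snoc (α := fun _ => α) v w j) - (n + 1) • ∫ w, g w ∂Q
        = (∑ j, g (v j) - n • ∫ w, g w ∂Q) + (g w - ∫ w, g w ∂Q) := by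
      simp only [Fin.sum_univ_castSucc, Fin.snoc_castSucc, Fin.snoc_last, succ_nsmul]
      abel
    rw [hsum, Nat.cast_succ]
    linarith

theorem exists_norm_smul_sum_sub_integral_sq_le (𝕜 : Type*) [RCLike 𝕜] [InnerProductSpace 𝕜 H]
    [Nonempty α] {ν : Measure α} [IsFiniteMeasure ν] (hg : Integrable g ν) {C : ℝ}
    (hgC : ∀ᵐ v ∂ν, ‖g v‖ ≤ C) {n : ℕ} (hn : 0 < n) :
    ∃ v : Fin n → α, ‖(ν.real Set.univ / n) • ∑ j, g (v j) - ∫ w, g w ∂ν‖ ^ 2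
      ≤ (C ^ 2 * ν.real Set.univ ^ 2 - ‖∫ w, g w ∂ν‖ ^ 2) / n := by
  rcases eq_zero_or_neZero ν with rfl | hν
  · exact ⟨fun _ => Classical.arbitrary α, by simp⟩
  set t := ν.real Set.univ
  have ht : 0 < t := measureReal_univ_pos
  set Q := (ν Set.univ)⁻¹ • ν
  have hgQ : MemLp g 2 Q :=
    MemLp.of_bound (hg.aestronglyMeasurable.smul_measure _) C (Measure.ae_smul_measure hgC _)
  set m := ∫ w, g w ∂Q
  have hmean : ∫ w, g w ∂ν = t • m := by
    rw [show m = _ from integral_smul_measure g _, smul_smul, ENNReal.toReal_inv,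
      ← measureReal_def, mul_inv_cancel₀ ht.ne', one_smul]
  have hsecond : ∫ w, ‖g w‖ ^ 2 ∂Q ≤ C ^ 2 :=
    calc ∫ w, ‖g w‖ ^ 2 ∂Q ≤ ∫ _, C ^ 2 ∂Q :=
          integral_mono_ae (hgQ.integrable_norm_pow two_ne_zero) (integrable_const _)
            ((Measure.ae_smul_measure hgC _).mono fun w hw =>
              pow_le_pow_left₀ (norm_nonneg _) hw 2)
      _ = C ^ 2 := by simp
  obtain ⟨v, hv⟩ := exists_norm_sum_sub_nsmul_integral_sq_le 𝕜 hgQ n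
  refine ⟨v, ?_⟩
  have hn' : (0 : ℝ) < n := Nat.cast_pos.2 hn
  have hdiff : (t / n) • ∑ j, g (v j) - t • m = (t / n) • (∑ j, g (v j) - n • m) := by
    rw [smul_sub, ← Nat.cast_smul_eq_nsmul ℝ, smul_smul, div_mul_cancel₀ _ hn'.ne']
  rw [hmean, hdiff, norm_smul, norm_smul, mul_pow, Real.norm_of_nonneg ht.le,
    Real.norm_of_nonneg (by positivity)]
  calc (t / n) ^ 2 * ‖∑ j, g (v j) - n • m‖ ^ 2 ≤ (t / n) ^ 2 * (n * (C ^ 2 - ‖m‖ ^ 2)) := by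
        gcongr
        exact hv.trans (by gcongr)
    _ = (C ^ 2 * t ^ 2 - (t * ‖m‖) ^ 2) / n := by
        field_simp

end Maurey

theorem stmt_14_general {m d : ℕ} (X : Set (Fin m → ℝ)) (V : Set (Fin d → ℝ))
    (P : Measure X)
    (Φ : V → Lp ℂ 2 P)
    (C : ℝ) (hC : ∀ v : V, ‖Φ v‖ ≤ C)
    (ν : Measure V) [IsFiniteMeasure ν]
    (ρ : V → ℂ) (hρ1 : ∀ᵐ v ∂ν, ‖ρ v‖ = 1)
    (hint : Integrable (fun v => ρ v • Φ v) ν)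
    (f : Lp ℂ 2 P) (hf : f = ∫ v, ρ v • Φ v ∂ν)
    (p : ℕ) (hp : 0 < p) :
    ‖f‖ ≤ C * (ν Set.univ).toReal ∧
      Metric.infDist f
          {g : Lp ℂ 2 P | ∃ (w : Fin p → ℂ) (vv : Fin p → V), g = ∑ j, w j • Φ (vv j)} ≤
        Real.sqrt ((C ^ 2 * (ν Set.univ).toReal ^ 2 - ‖f‖ ^ 2) / p) := by
  have hgC : ∀ᵐ v ∂ν, ‖ρ v • Φ v‖ ≤ C := by
    filter_upwards [hρ1] with v hv
    rw [norm_smul, hv, one_mul]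
    exact hC v
  refine ⟨hf ▸ norm_integral_le_of_norm_le_const hgC, ?_⟩
  rcases isEmpty_or_nonempty V with hV | hV
  · have : IsEmpty (Fin p → V) := ⟨fun vv => isEmptyElim (vv ⟨0, hp⟩)⟩
    simp only [IsEmpty.exists_iff, exists_false, Set.ofPred_false, Metric.infDist_empty]
    exact Real.sqrt_nonneg _
  obtain ⟨v, hv⟩ := exists_norm_smul_sum_sub_integral_sq_le ℂ hint hgC hp
  rw [← hf] at hv
  set s := (ν.real Set.univ / p) • ∑ j, ρ (v j) • Φ (v j)
  have hs : ∃ (w : Fin p → ℂ) (vv : Fin p → V), s = ∑ j, w j • Φ (vv j) :=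
    ⟨fun j => ((ν.real Set.univ / p : ℝ) : ℂ) * ρ (v j), v, by
      simp only [s, Finset.smul_sum, mul_smul, Complex.coe_smul]; rfl⟩
  calc Metric.infDist f _ ≤ dist f s := Metric.infDist_le_dist_of_mem hs
    _ ≤ _ := by
        rw [dist_comm, dist_eq_norm]
        exact Real.le_sqrt_of_sq_le hv

/-- **Barron's bound (Maurey–Jones–Barron).** Let `P` be a σ-finite measure on
`X ⊆ ℝ^m`, let `φ : X × V → ℝ` (with `V ⊆ ℝ^d`) be such that
`G = {φ(·;v) : v ∈ V}` is a bounded subset of `L²(P)` — the elements `Φ v ∈ L²(P)`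
represent the functions `φ(·;v)` and satisfy `‖Φ v‖_{L²(P)} ≤ C` — and let the finite
complex Borel measure `μ` be given in polar form `μ = ρ · ν` (`ν = |μ|` finite,
`‖ρ‖ = 1` a.e., so `‖μ‖_TV = ν(V)`).  Let `f = S[μ] = ∫ φ(·;v) dμ(v)` (a Bochner
integral in `L²(P)`), which satisfies `‖f‖_{L²(P)} ≤ C ‖μ‖_TV`.  Then for every `p ≥ 1`
the `L²(P)`-distance from `f` to `span_p G`, the set of `p`-term linear combinations
`∑_{j=1}^p w_j φ(·;v_j)` with `w_j ∈ ℂ`, `v_j ∈ V`, satisfies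
`dist(f, span_p G) ≤ √((C²‖μ‖_TV² − ‖f‖²)/p)`. -/
theorem stmt_14 {m d : ℕ} (X : Set (Fin m → ℝ)) (V : Set (Fin d → ℝ))
    (P : Measure X) [SigmaFinite P]
    (φ : X → V → ℝ) (Φ : V → Lp ℂ 2 P)
    (hφ : ∀ v : V, (Φ v : X → ℂ) =ᵐ[P] fun x => ((φ x v : ℝ) : ℂ))
    (C : ℝ) (hC : ∀ v : V, ‖Φ v‖ ≤ C)
    (ν : Measure V) [IsFiniteMeasure ν]
    (ρ : V → ℂ) (hρm : Measurable ρ) (hρ1 : ∀ᵐ v ∂ν, ‖ρ v‖ = 1)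
    (hint : Integrable (fun v => ρ v • Φ v) ν)
    (f : Lp ℂ 2 P) (hf : f = ∫ v, ρ v • Φ v ∂ν)
    (p : ℕ) (hp : 0 < p) :
    ‖f‖ ≤ C * (ν Set.univ).toReal ∧
      Metric.infDist f
          {g : Lp ℂ 2 P | ∃ (w : Fin p → ℂ) (vv : Fin p → V), g = ∑ j, w j • Φ (vv j)} ≤
        Real.sqrt ((C ^ 2 * (ν Set.univ).toReal ^ 2 - ‖f‖ ^ 2) / p) :=
  stmt_14_general X V P Φ C hC ν ρ hρ1 hint f hf p hp
end

section
/- (Uniform law of large numbers for Monte-Carlo integration over an RKHS ball.) Let X be a measurable space with probability measure P, let H be a real Hilbert space, and let Φ : X → H be a strongly measurable feature map inducing the kernel k(x,y) := ⟨Φ(x), Φ(y)⟩_H; the RKHS functions are f_h(x) := ⟨h, Φ(x)⟩_H for h ∈ H. Assume C² := E[k(X,X)] = E‖Φ(X)‖² < ∞ for X ∼ P, and let X₁, …, X_n be i.i.d. with law P. Then for every B > 0, E[ sup_{h ∈ H, ‖h‖ ≤ B} | (1/n) Σ_{i=1}^n f_h(X_i) − E[f_h(X)] | ] ≤ 4 B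 C / √n. -/
/-!
For a fixed sample the supremum is attained by duality: it equals `B ‖S‖`, where
`S = n⁻¹ ∑ᵢ (Φ Xᵢ - E Φ)` is the centred empirical mean embedding. Distinct coordinates of the
sample are independent, so the cross terms of `E ‖S‖²` vanish and
`E ‖S‖² = (E ‖Φ‖² - ‖E Φ‖²) / n ≤ C² / n`. Jensen's inequality `E ‖S‖ ≤ √(E ‖S‖²)` then bounds
the expected supremum by `B C / √n`.
-/

open MeasureTheory ProbabilityTheory

local notation "⟪" x ", " y "⟫" => @inner ℝ _ _ x y

lemma integral_norm_le_sqrt_integral_norm_sq {Ω E : Type*} [MeasurableSpace Ω] {μ : Measure Ω}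
    [IsProbabilityMeasure μ] [NormedAddCommGroup E] {f : Ω → E} (hf : MemLp f 2 μ) :
    ∫ x, ‖f x‖ ∂μ ≤ √(∫ x, ‖f x‖ ^ 2 ∂μ) := by
  have hvar := variance_eq_sub hf.norm ▸ variance_nonneg (fun x => ‖f x‖) μ
  exact (le_abs_self _).trans (Real.abs_le_sqrt (by simpa using hvar))

section InnerProductSpace

variable {H : Type*} [NormedAddCommGroup H] [InnerProductSpace ℝ H]

lemma isGreatest_abs_inner_of_norm_le {B : ℝ} (hB : 0 ≤ B) (v : H) :
    IsGreatest {r : ℝ | ∃ h : H, ‖h‖ ≤ B ∧ r = |⟪h, v⟫|} (B * ‖v‖) := by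
  refine ⟨?_, ?_⟩
  · rcases eq_or_ne v 0 with rfl | hv
    · exact ⟨0, by simpa using hB, by simp⟩
    have hv' : ‖v‖ ≠ 0 := norm_ne_zero_iff.2 hv
    refine ⟨(B / ‖v‖) • v, ?_, ?_⟩
    · rw [norm_smul, Real.norm_of_nonneg (by positivity), div_mul_cancel₀ _ hv']
    · rw [real_inner_smul_left, real_inner_self_eq_norm_sq, abs_of_nonneg (by positivity)]
      field_simp
  · rintro r ⟨h, hh, rfl⟩
    exact (abs_real_inner_le_norm h v).trans (by gcongr)

lemma MeasureTheory.MemLp.integrable_inner {Ω : Type*} [MeasurableSpace Ω] {μ : Measure Ω}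
    {f g : Ω → H} (hf : MemLp f 2 μ) (hg : MemLp g 2 μ) :
    Integrable (fun x => ⟪f x, g x⟫) μ :=
  (hf.norm.integrable_mul hg.norm).mono' (hf.1.inner hg.1)
    (ae_of_all _ fun _ => norm_inner_le_norm _ _)

variable [CompleteSpace H]

lemma integral_norm_sub_integral_sq {Ω : Type*} [MeasurableSpace Ω] {μ : Measure Ω}
    [IsProbabilityMeasure μ] {f : Ω → H} (hf : MemLp f 2 μ) :
    ∫ x, ‖f x - ∫ y, f y ∂μ‖ ^ 2 ∂μ = ∫ x, ‖f x‖ ^ 2 ∂μ - ‖∫ x, f x ∂μ‖ ^ 2 := by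
  set m := ∫ y, f y ∂μ
  have hf2 : Integrable (fun x => ‖f x‖ ^ 2) μ := (memLp_two_iff_integrable_sq_norm hf.1).1 hf
  have hcross : Integrable (fun x => 2 * ⟪m, f x⟫) μ :=
    ((hf.integrable one_le_two).const_inner m).const_mul 2
  have hdiff : Integrable (fun x => ‖f x‖ ^ 2 - 2 * ⟪m, f x⟫) μ := hf2.sub hcross
  simp_rw [norm_sub_sq_real, real_inner_comm m]
  rw [integral_add hdiff (integrable_const _), integral_sub hf2 hcross,
    integral_const_mul, integral_inner (hf.integrable one_le_two), real_inner_self_eq_norm_sq]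
  simp
  ring

lemma integral_inner_prod {α β : Type*} [MeasurableSpace α] [MeasurableSpace β]
    {μ : Measure α} {ν : Measure β} [SFinite μ] [SFinite ν] {f : α → H} {g : β → H}
    (hf : Integrable f μ) (hg : Integrable g ν) :
    ∫ p, ⟪f p.1, g p.2⟫ ∂(μ.prod ν) = ⟪∫ x, f x ∂μ, ∫ y, g y ∂ν⟫ := by
  have hint : Integrable (fun p : α × β => ⟪f p.1, g p.2⟫) (μ.prod ν) :=
    (hf.norm.mul_prod hg.norm).mono' (hf.1.comp_fst.inner hg.1.comp_snd)
      (ae_of_all _ fun _ => norm_inner_le_norm _ _)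
  rw [integral_prod _ hint]
  dsimp only
  simp_rw [integral_inner (𝕜 := ℝ) hg, real_inner_comm (∫ y, g y ∂ν)]
  rw [integral_inner hf, real_inner_comm]

end InnerProductSpace

section Sample

variable {H : Type*} [NormedAddCommGroup H] [InnerProductSpace ℝ H] [CompleteSpace H]
  {X : Type*} [MeasurableSpace X] {P : Measure X} [IsProbabilityMeasure P]
  {ι : Type*} [Fintype ι]

lemma integral_inner_eval_pi_of_ne {f g : X → H} (hf : Integrable f P) (hg : Integrable g P)
    {i j : ι} (hij : i ≠ j) :
    ∫ xs, ⟪f (xs i), g (xs j)⟫ ∂(Measure.pi fun _ : ι => P) = ⟪∫ x, f x ∂P, ∫ x, g x ∂P⟫ := by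
  have hind : IndepFun (fun xs : ι → X => xs i) (fun xs => xs j) (Measure.pi fun _ => P) :=
    (iIndepFun_pi (ι := ι) (X := fun _ => id) fun _ => aemeasurable_id).indepFun hij
  have hpair := (indepFun_iff_map_prod_eq_prod_map_map (measurable_pi_apply i).aemeasurable
    (measurable_pi_apply j).aemeasurable).1 hind
  rw [(measurePreserving_eval _ i).map_eq, (measurePreserving_eval _ j).map_eq] at hpair
  rw [← integral_inner_prod hf hg, ← hpair, integral_map (by fun_prop)]
  rw [hpair]
  exact hf.1.comp_fst.inner hg.1.comp_snd

lemma integral_norm_sum_eval_sq {f : X → H} (hf : MemLp f 2 P) (hf0 : ∫ x, f x ∂P = 0) :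
    ∫ xs, ‖∑ i, f (xs i)‖ ^ 2 ∂(Measure.pi fun _ : ι => P) =
      Fintype.card ι * ∫ x, ‖f x‖ ^ 2 ∂P := by
  classical
  have heval : ∀ i : ι, MemLp (fun xs : ι → X => f (xs i)) 2 (Measure.pi fun _ => P) :=
    fun i => hf.comp_measurePreserving (measurePreserving_eval _ i)
  have hterm : ∀ i j : ι, ∫ xs, ⟪f (xs i), f (xs j)⟫ ∂(Measure.pi fun _ => P) =
      if i = j then ∫ x, ‖f x‖ ^ 2 ∂P else 0 := by
    intro i j
    split_ifs with hij
    · subst hij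
      simp_rw [real_inner_self_eq_norm_sq]
      exact integral_comp_eval (μ := fun _ : ι => P) (f := fun x => ‖f x‖ ^ 2) (hf.1.norm.pow 2)
    · rw [integral_inner_eval_pi_of_ne (hf.integrable one_le_two) (hf.integrable one_le_two) hij,
        hf0, inner_zero_left]
  simp_rw [← real_inner_self_eq_norm_sq, sum_inner, inner_sum]
  rw [integral_finsetSum _ fun i _ =>
    integrable_finsetSum _ fun j _ => (heval i).integrable_inner (heval j)]
  simp_rw [integral_finsetSum _ fun j _ => (heval _).integrable_inner (heval j), hterm]
  simp

lemma integral_norm_sum_eval_le {f : X → H} (hf : MemLp f 2 P) (hf0 : ∫ x, f x ∂P = 0) :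
    ∫ xs, ‖∑ i, f (xs i)‖ ∂(Measure.pi fun _ : ι => P) ≤
      √(Fintype.card ι * ∫ x, ‖f x‖ ^ 2 ∂P) := by
  rw [← integral_norm_sum_eval_sq hf hf0]
  exact integral_norm_le_sqrt_integral_norm_sq
    (memLp_finsetSum _ fun i _ => hf.comp_measurePreserving (measurePreserving_eval _ i))

end Sample

lemma sSup_abs_empirical_mean_sub_integral_inner {H X : Type*} [NormedAddCommGroup H]
    [InnerProductSpace ℝ H] [CompleteSpace H] [MeasurableSpace X] {P : Measure X} {Φ : X → H}
    (hΦ : Integrable Φ P) {n : ℕ} (hn : n ≠ 0) {B : ℝ} (hB : 0 ≤ B) (xs : Fin n → X) :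
    sSup {r : ℝ | ∃ h : H, ‖h‖ ≤ B ∧
        r = |(1 / (n : ℝ)) * ∑ i, ⟪h, Φ (xs i)⟫ - ∫ x, ⟪h, Φ x⟫ ∂P|} =
      B * ‖(n : ℝ)⁻¹ • ∑ i, (Φ (xs i) - ∫ x, Φ x ∂P)‖ := by
  have hdev : ∀ h : H, (1 / (n : ℝ)) * ∑ i, ⟪h, Φ (xs i)⟫ - ∫ x, ⟪h, Φ x⟫ ∂P =
      ⟪h, (n : ℝ)⁻¹ • ∑ i, (Φ (xs i) - ∫ x, Φ x ∂P)⟫ := by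
    intro h
    simp_rw [integral_inner hΦ, real_inner_smul_right, inner_sum, inner_sub_right,
      Finset.sum_sub_distrib, Finset.sum_const, Finset.card_univ, Fintype.card_fin, nsmul_eq_mul]
    field_simp
  simp_rw [hdev]
  exact (isGreatest_abs_inner_of_norm_le hB _).csSup_eq

/-- **Uniform law of large numbers for Monte-Carlo integration over an RKHS ball.**
Let `P` be a probability measure on `X`, `Φ  : X → H` a strongly measurable feature map
into a real Hilbert space inducing the kernel `k(x,y) = ⟪Φ x, Φ y⟫`; the RKHS functions
are `f_h = ⟪h, Φ ·⟫` for `h ∈ H`.  Assume `C² = E[k(X,X)] = ∫ ‖Φ x‖² dP < ∞`.  Then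
for an i.i.d. sample `X₁, …, X_n ∼ P` (modeled by the product measure on `Fin n → X`)
and every `B > 0`,
`E[ sup_{‖h‖ ≤ B} |(1/n) ∑ f_h(Xᵢ) − E f_h| ] ≤ 4 B C / √n`. -/
theorem stmt_15 {X H : Type*} [MeasurableSpace X]
    [NormedAddCommGroup H] [InnerProductSpace ℝ H] [CompleteSpace H]
    (P : Measure X) [IsProbabilityMeasure P]
    (Φ : X → H) (hΦm : StronglyMeasurable Φ)
    (hΦ2 : Integrable (fun x => ‖Φ x‖ ^ 2) P)
    (C : ℝ) (hC : C = Real.sqrt (∫ x, ‖Φ x‖ ^ 2 ∂P))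
    (n : ℕ) (hn : 0 < n) (B : ℝ) (hB : 0 < B) :
    (∫ xs : Fin n → X,
        sSup {r : ℝ | ∃ h : H, ‖h‖ ≤ B ∧
          r = |(1 / (n : ℝ)) * ∑ i, ⟪h, Φ (xs i)⟫ - ∫ x, ⟪h, Φ x⟫ ∂P|}
        ∂(Measure.pi fun _ : Fin n => P)) ≤
      4 * B * C / Real.sqrt n := by
  have hΦ : MemLp Φ 2 P := (memLp_two_iff_integrable_sq_norm hΦm.aestronglyMeasurable).2 hΦ2
  set m := ∫ x, Φ x ∂P
  have hcent : MemLp (fun x => Φ x - m) 2 P := hΦ.sub (memLp_const m)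
  have hcent0 : ∫ x, (Φ x - m) ∂P = 0 := by
    rw [integral_sub (hΦ.integrable one_le_two) (integrable_const m)]
    simp [m]
  have hvar : ∫ x, ‖Φ x - m‖ ^ 2 ∂P ≤ C ^ 2 := by
    rw [integral_norm_sub_integral_sq hΦ, hC, Real.sq_sqrt (integral_nonneg fun _ => by positivity)]
    exact sub_le_self _ (sq_nonneg _)
  have hC0 : 0 ≤ C := hC ▸ Real.sqrt_nonneg _
  simp_rw [sSup_abs_empirical_mean_sub_integral_inner (hΦ.integrable one_le_two) hn.ne' hB.le,
    norm_smul, integral_const_mul]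
  calc B * (‖(n : ℝ)⁻¹‖ * ∫ xs, ‖∑ i, (Φ (xs i) - m)‖ ∂(Measure.pi fun _ : Fin n => P))
      ≤ B * ((n : ℝ)⁻¹ * √(n * C ^ 2)) := by
        rw [Real.norm_of_nonneg (by positivity)]
        gcongr
        refine (integral_norm_sum_eval_le hcent hcent0).trans ?_
        rw [Fintype.card_fin]
        gcongr
    _ = B * C / √n := by
        have hsqrt : (0 : ℝ) < √n := Real.sqrt_pos.2 (Nat.cast_pos.2 hn)
        rw [Real.sqrt_mul (Nat.cast_nonneg _), Real.sqrt_sq hC0]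
        field_simp
        rw [Real.sq_sqrt (Nat.cast_nonneg _)]
    _ ≤ 4 * B * C / √n := by gcongr; linarith
end

section
/- (Uniform law of large numbers for sampling discretization of infinitely wide models.) Let V be a measurable space, μ a finite signed Borel measure on V with ‖μ‖_{TV} := |μ|(V) > 0, P_μ := |μ| / ‖μ‖_{TV}, and h := dμ/d|μ| the Radon–Nikodym derivative (so |h| = 1 on V, |μ|-a.e.). Let H be a real Hilbert space and Ψ : V → H a strongly measurable feature map with kernel K(v,v') := ⟨Ψ(v), Ψ(v')⟩_H, and assume C² := ∫_V K(v,v) dP_μ(v) < ∞. Let φ : X × V → ℝ be such that for each x ∈ X there exists g_x ∈ H with φ(x;v) = ⟨g_x, Ψ(v)⟩_H and ‖g_x‖_H ≤ B. Let v₁, …, v_p be i.i.d. with law P_μ and set w_j := (‖μ‖_{TV}/p) h(v_j). Then E[ sup_{x ∈ X} | Σ_{j=1}^p w_j φ(x;v_j) − S[μ](x) | ] ≤ 4 B C ‖μ‖_{TV} / √p, where S[μ](x) := ∫_V φ(x;v) dμ(v). -/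
/-!
Writing `G v := hd v • Ψ v` and `m := ∫ G dP_μ`, the discretization error at `x` is
`⟪g x, (‖μ‖_TV / p) • ∑ⱼ (G vⱼ - m)⟫`, so its supremum over `x` is at most
`B (‖μ‖_TV / p) ‖∑ⱼ (G vⱼ - m)‖`; no symmetrization is needed. The summands are i.i.d. and
centered in `H`, hence orthogonal in `L²`, so `E ‖∑ⱼ (G vⱼ - m)‖ ≤ √p ‖G - m‖_{L²} ≤ √p ‖G‖_{L²}`,
and `‖G‖_{L²} = C` because `|hd| = 1`. This gives the bound with `1` in place of `4`.
-/

open MeasureTheory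

local notation "⟪" x ", " y "⟫" => @inner ℝ _ _ x y

section

variable {Ω H : Type*} [MeasurableSpace Ω] [NormedAddCommGroup H]

theorem integral_norm_le_sqrt_integral_norm_sq_s16 {P : Measure Ω} [IsProbabilityMeasure P]
    {f : Ω → H} (hf : MemLp f 2 P) :
    ∫ ω, ‖f ω‖ ∂P ≤ √(∫ ω, ‖f ω‖ ^ 2 ∂P) := by
  have hvar := ProbabilityTheory.variance_nonneg (fun ω => ‖f ω‖) P
  rw [ProbabilityTheory.variance_eq_sub hf.norm] at hvar
  refine (Real.le_sqrt (integral_nonneg fun _ => norm_nonneg _)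
    (integral_nonneg fun _ => sq_nonneg _)).mpr ?_
  simpa only [Pi.pow_apply, sub_nonneg] using hvar

theorem MeasureTheory.MemLp.sum_comp_eval {P : Measure Ω} [IsProbabilityMeasure P] {p : ENNReal}
    {f : Ω → H} (hf : MemLp f p P) (n : ℕ) :
    MemLp (fun vs : Fin n → Ω => ∑ j, f (vs j)) p (Measure.pi fun _ => P) :=
  memLp_finsetSum _ fun j _ => hf.comp_measurePreserving (measurePreserving_eval _ j)

theorem ae_norm_smul_eq_of_ae_abs_eq_one [NormedSpace ℝ H] {P : Measure Ω} {h : Ω → ℝ}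
    (h1 : ∀ᵐ ω ∂P, |h ω| = 1) (f : Ω → H) : ∀ᵐ ω ∂P, ‖h ω • f ω‖ = ‖f ω‖ := by
  filter_upwards [h1] with ω hω
  rw [norm_smul, Real.norm_eq_abs, hω, one_mul]

variable [InnerProductSpace ℝ H]

theorem sSup_abs_inner_le {X : Type*} {g : X → H} {B : ℝ} (hB : 0 ≤ B) (hg : ∀ x, ‖g x‖ ≤ B)
    (z : H) : sSup {r : ℝ | ∃ x, r = |⟪g x, z⟫|} ≤ B * ‖z‖ := by
  refine Real.sSup_le ?_ (by positivity)
  rintro r ⟨x, rfl⟩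
  exact (abs_real_inner_le_norm _ _).trans (by gcongr; exact hg x)

theorem sum_mul_inner_sub_mul_inner {n : ℕ} (hn : n ≠ 0) (c : ℝ) (u m : H) (w : Fin n → H) :
    ∑ j, c / n * ⟪u, w j⟫ - c * ⟪u, m⟫ = ⟪u, (c / n) • ∑ j, (w j - m)⟫ := by
  rw [real_inner_smul_right, inner_sum]
  simp_rw [inner_sub_right]
  rw [Finset.sum_sub_distrib, Finset.sum_const, Finset.card_univ, Fintype.card_fin,
    nsmul_eq_mul, mul_sub, Finset.mul_sum]
  field_simp

variable [CompleteSpace H]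

theorem integral_norm_sub_integral_sq_le {P : Measure Ω} [IsProbabilityMeasure P]
    {f : Ω → H} (hf : MemLp f 2 P) :
    ∫ ω, ‖f ω - ∫ ω', f ω' ∂P‖ ^ 2 ∂P ≤ ∫ ω, ‖f ω‖ ^ 2 ∂P := by
  set m := ∫ ω, f ω ∂P
  have hf1 : Integrable f P := hf.integrable one_le_two
  have hf2 : Integrable (fun ω => ‖f ω‖ ^ 2) P :=
    (memLp_two_iff_integrable_sq_norm hf.aestronglyMeasurable).mp hf
  have hinner : Integrable (fun ω => 2 * ⟪f ω, m⟫) P := (hf1.inner_const m).const_mul 2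
  have hdiff : Integrable (fun ω => ‖f ω‖ ^ 2 - 2 * ⟪f ω, m⟫) P := hf2.sub hinner
  have hcross : ∫ ω, 2 * ⟪f ω, m⟫ ∂P = 2 * ‖m‖ ^ 2 := by
    rw [integral_const_mul]
    simp_rw [real_inner_comm m]
    rw [integral_inner hf1, real_inner_self_eq_norm_sq]
  simp_rw [norm_sub_sq_real]
  rw [integral_add hdiff (integrable_const _), integral_sub hf2 hinner, hcross, integral_const,
    probReal_univ, one_smul]
  nlinarith [sq_nonneg ‖m‖]

theorem integral_norm_add_sq_prod {α β : Type*} [MeasurableSpace α] [MeasurableSpace β]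
    {P : Measure α} {Q : Measure β} [IsProbabilityMeasure P] [IsProbabilityMeasure Q]
    {f : α → H} {g : β → H} (hf : MemLp f 2 P) (hg : MemLp g 2 Q) (hg0 : ∫ b, g b ∂Q = 0) :
    ∫ z, ‖f z.1 + g z.2‖ ^ 2 ∂(P.prod Q) = ∫ a, ‖f a‖ ^ 2 ∂P + ∫ b, ‖g b‖ ^ 2 ∂Q := by
  have hf2 : Integrable (fun a => ‖f a‖ ^ 2) P :=
    (memLp_two_iff_integrable_sq_norm hf.aestronglyMeasurable).mp hf
  have hg2 : Integrable (fun b => ‖g b‖ ^ 2) Q :=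
    (memLp_two_iff_integrable_sq_norm hg.aestronglyMeasurable).mp hg
  have hfst : Integrable (fun z : α × β => ‖f z.1‖ ^ 2) (P.prod Q) := hf2.comp_fst Q
  have hsnd : Integrable (fun z : α × β => ‖g z.2‖ ^ 2) (P.prod Q) := hg2.comp_snd P
  have hcross : Integrable (fun z : α × β => ⟪f z.1, g z.2⟫) (P.prod Q) := by
    refine ((hf.integrable one_le_two).norm.mul_prod (hg.integrable one_le_two).norm).mono'
      ((hf.aestronglyMeasurable.comp_fst).inner hg.aestronglyMeasurable.comp_snd) ?_
    exact ae_of_all _ fun z => abs_real_inner_le_norm _ _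
  have hcross0 : ∫ z, ⟪f z.1, g z.2⟫ ∂(P.prod Q) = 0 := by
    simp [integral_prod _ hcross, integral_inner (hg.integrable one_le_two), hg0]
  have hfst_cross : Integrable (fun z : α × β => ‖f z.1‖ ^ 2 + 2 * ⟪f z.1, g z.2⟫) (P.prod Q) :=
    hfst.add (hcross.const_mul 2)
  simp_rw [norm_add_sq_real]
  rw [integral_add hfst_cross hsnd, integral_add hfst (hcross.const_mul 2),
    integral_const_mul, hcross0,
    integral_fun_fst fun a => ‖f a‖ ^ 2, integral_fun_snd fun b => ‖g b‖ ^ 2]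
  simp

theorem integral_norm_sum_sq_pi {P : Measure Ω} [IsProbabilityMeasure P] {f : Ω → H}
    (hf : MemLp f 2 P) (hf0 : ∫ ω, f ω ∂P = 0) (n : ℕ) :
    ∫ vs, ‖∑ j, f (vs j)‖ ^ 2 ∂(Measure.pi fun _ : Fin n => P) = n * ∫ ω, ‖f ω‖ ^ 2 ∂P := by
  induction n with
  | zero => simp
  | succ n ih =>
    have hsum0 : ∫ vs, ∑ j, f (vs j) ∂(Measure.pi fun _ : Fin n => P) = 0 := by
      rw [integral_finsetSum _ fun j _ => integrable_comp_eval (hf.integrable one_le_two)]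
      simp [integral_comp_eval (μ := fun _ => P) hf.aestronglyMeasurable, hf0]
    rw [← ((measurePreserving_piFinSuccAbove (fun _ : Fin (n + 1) => P) 0).symm).integral_comp']
    simp only [MeasurableEquiv.piFinSuccAbove, Fin.insertNthEquiv_zero, MeasurableEquiv.symm_mk,
      Equiv.symm_symm, MeasurableEquiv.coe_mk, Fin.consEquiv_apply, Fin.sum_univ_succ,
      Fin.cons_zero, Fin.cons_succ]
    rw [integral_norm_add_sq_prod hf (hf.sum_comp_eval n) hsum0, ih]
    push_cast
    ring

theorem integral_norm_sum_sub_integral_le {P : Measure Ω} [IsProbabilityMeasure P]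
    {f : Ω → H} (hf : MemLp f 2 P) (n : ℕ) :
    ∫ vs, ‖∑ j, (f (vs j) - ∫ ω, f ω ∂P)‖ ∂(Measure.pi fun _ : Fin n => P) ≤
      √n * √(∫ ω, ‖f ω‖ ^ 2 ∂P) := by
  have hc : MemLp (fun ω => f ω - ∫ ω', f ω' ∂P) 2 P := hf.sub (memLp_const _)
  have hc0 : ∫ ω, (f ω - ∫ ω', f ω' ∂P) ∂P = 0 := by
    simp [integral_sub (hf.integrable one_le_two) (integrable_const _)]
  calc _ ≤ √(∫ vs, ‖∑ j, (f (vs j) - ∫ ω, f ω ∂P)‖ ^ 2 ∂(Measure.pi fun _ : Fin n => P)) :=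
        integral_norm_le_sqrt_integral_norm_sq_s16 (hc.sum_comp_eval n)
    _ = √(n * ∫ ω, ‖f ω - ∫ ω', f ω' ∂P‖ ^ 2 ∂P) := by rw [integral_norm_sum_sq_pi hc hc0]
    _ ≤ √(n * ∫ ω, ‖f ω‖ ^ 2 ∂P) :=
        Real.sqrt_le_sqrt (mul_le_mul_of_nonneg_left (integral_norm_sub_integral_sq_le hf)
          n.cast_nonneg)
    _ = √n * √(∫ ω, ‖f ω‖ ^ 2 ∂P) := Real.sqrt_mul (Nat.cast_nonneg n) _

theorem integral_sSup_abs_inner_smul_sum_sub_integral_le {X : Type*} {P : Measure Ω}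
    [IsProbabilityMeasure P] {G : Ω → H} (hG : MemLp G 2 P) {g : X → H} {B : ℝ} (hB : 0 ≤ B)
    (hg : ∀ x, ‖g x‖ ≤ B) {c : ℝ} (hc : 0 ≤ c) (n : ℕ) :
    ∫ vs, sSup {r : ℝ | ∃ x, r = |⟪g x, c • ∑ j, (G (vs j) - ∫ ω, G ω ∂P)⟫|}
        ∂(Measure.pi fun _ : Fin n => P) ≤
      B * c * (√n * √(∫ ω, ‖G ω‖ ^ 2 ∂P)) := by
  set S := fun vs : Fin n → Ω => ∑ j, (G (vs j) - ∫ ω, G ω ∂P)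
  have hS : Integrable (fun vs => ‖S vs‖) (Measure.pi fun _ : Fin n => P) :=
    ((hG.sub (memLp_const _)).sum_comp_eval n).integrable one_le_two |>.norm
  calc _ ≤ ∫ vs, B * c * ‖S vs‖ ∂(Measure.pi fun _ : Fin n => P) := by
        refine integral_mono_of_nonneg (ae_of_all _ fun vs => Real.sSup_nonneg ?_)
          (hS.const_mul _) (ae_of_all _ fun vs => ?_)
        · rintro r ⟨x, rfl⟩
          exact abs_nonneg _
        · refine (sSup_abs_inner_le hB hg _).trans_eq ?_
          rw [norm_smul, Real.norm_of_nonneg hc, ← mul_assoc]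
    _ = B * c * ∫ vs, ‖S vs‖ ∂(Measure.pi fun _ : Fin n => P) := integral_const_mul _ _
    _ ≤ B * c * (√n * √(∫ ω, ‖G ω‖ ^ 2 ∂P)) := by
        gcongr
        exact integral_norm_sum_sub_integral_le hG n

end

/-- **Uniform law of large numbers for the sampling discretization of infinitely wide
models.** The finite signed Borel measure `μ` is represented in polar form: `ν = |μ|` is
a finite measure with `‖μ‖_TV = ν(V) > 0` and `hd = dμ/d|μ|` satisfies `|hd| = 1` a.e.;
`P_μ = |μ|/‖μ‖_TV` is the normalized measure.  The feature map `Ψ : V → H` induces the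
kernel `K(v,v') = ⟪Ψ v, Ψ v'⟫` with `C² = ∫ K(v,v) dP_μ < ∞`; each function `φ(x;·)`
lies in the `B`-ball of the RKHS: `φ(x;v) = ⟪g x, Ψ v⟫` with `‖g x‖ ≤ B`.  For an
i.i.d. sample `v₁, …, v_p ∼ P_μ` (modeled by the product measure) and the weights
`w_j = (‖μ‖_TV/p)·hd(v_j)`, we have
`E[ sup_x |∑_j w_j φ(x;v_j) − S[μ](x)| ] ≤ 4 B C ‖μ‖_TV / √p`, where
`S[μ](x) = ∫ φ(x;v) dμ(v) = ∫ hd(v) φ(x;v) dν(v)`. -/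
theorem stmt_16 {X V H : Type*} [MeasurableSpace V]
    [NormedAddCommGroup H] [InnerProductSpace ℝ H] [CompleteSpace H]
    (ν : Measure V) [IsFiniteMeasure ν] (hTV : 0 < (ν Set.univ).toReal)
    (hd : V → ℝ) (hhdm : Measurable hd) (hhd1 : ∀ᵐ v ∂ν, |hd v| = 1)
    (Pμ : Measure V) (hPμ : Pμ = (ν Set.univ)⁻¹ • ν)
    (Ψ : V → H) (hΨm : StronglyMeasurable Ψ)
    (hΨ2 : Integrable (fun v => ‖Ψ v‖ ^ 2) Pμ)
    (C : ℝ) (hC : C = Real.sqrt (∫ v, ‖Ψ v‖ ^ 2 ∂Pμ))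
    (φ : X → V → ℝ) (g : X → H) (B : ℝ) (hB : 0 ≤ B)
    (hφ : ∀ x v, φ x v = ⟪g x, Ψ v⟫) (hgB : ∀ x, ‖g x‖ ≤ B)
    (p : ℕ) (hp : 0 < p) :
    (∫ vs : Fin p → V,
        sSup {r : ℝ | ∃ x : X,
          r = |(∑ j, (((ν Set.univ).toReal / (p : ℝ)) * hd (vs j)) * φ x (vs j)) -
                ∫ v, hd v * φ x v ∂ν|}
        ∂(Measure.pi fun _ : Fin p => Pμ)) ≤
      4 * B * C * (ν Set.univ).toReal / Real.sqrt p := by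
  set TV : ℝ := (ν Set.univ).toReal
  have : NeZero ν := ⟨fun h => by simp [TV, h] at hTV⟩
  have : IsProbabilityMeasure Pμ := hPμ ▸ inferInstance
  have hνPμ : ν = ν Set.univ • Pμ := by
    rw [hPμ, smul_smul, ENNReal.mul_inv_cancel (NeZero.ne _) (measure_ne_top ν _), one_smul]
  set G : V → H := fun v => hd v • Ψ v
  have hGΨ : ∀ᵐ v ∂Pμ, ‖G v‖ = ‖Ψ v‖ :=
    ae_norm_smul_eq_of_ae_abs_eq_one (hPμ ▸ Measure.ae_smul_measure hhd1 _) Ψ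
  have hG : MemLp G 2 Pμ :=
    ((memLp_two_iff_integrable_sq_norm hΨm.aestronglyMeasurable).mpr hΨ2).congr_norm
      (hhdm.stronglyMeasurable.smul hΨm).aestronglyMeasurable (hGΨ.mono fun _ hv => hv.symm)
  have hGC : √(∫ v, ‖G v‖ ^ 2 ∂Pμ) = C := by
    rw [hC, integral_congr_ae (hGΨ.mono fun _ hv => congrArg (· ^ 2) hv)]
  set m := ∫ v, G v ∂Pμ
  have herror : ∀ (vs : Fin p → V) x,
      (∑ j, (TV / p * hd (vs j)) * φ x (vs j)) - ∫ v, hd v * φ x v ∂ν =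
        ⟪g x, (TV / p) • ∑ j, (G (vs j) - m)⟫ := by
    intro vs x
    have hGφ : ∀ v, hd v * φ x v = ⟪g x, G v⟫ := fun v => by rw [hφ, real_inner_smul_right]
    have hmean : ∫ v, hd v * φ x v ∂ν = TV * ⟪g x, m⟫ := by
      simp_rw [hGφ]
      rw [hνPμ, integral_smul_measure, integral_inner (hG.integrable one_le_two), smul_eq_mul]
    simp_rw [hmean, mul_assoc, hGφ]
    exact sum_mul_inner_sub_mul_inner hp.ne' _ _ _ _
  have hC0 : 0 ≤ C := hC ▸ Real.sqrt_nonneg _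
  simp only [herror]
  calc _ ≤ B * (TV / p) * (√p * C) :=
        hGC ▸ integral_sSup_abs_inner_smul_sum_sub_integral_le hG hB hgB (by positivity) p
    _ = B * C * TV / √p := by
        field_simp
        rw [Real.sq_sqrt (Nat.cast_nonneg p)]
    _ ≤ 4 * B * C * TV / √p := by
        gcongr
        linarith
end

section
/- Let X₁, …, X_n be i.i.d. random variables with law P on a measurable space X, and let g : X → ℝ be a bounded measurable function with sup norm ‖g‖_∞ and L²(P) norm ‖g‖₂² := E[g(X)²]. Define the empirical norm ‖g‖_n² := (1/n) Σ_{i=1}^n g(X_i)². Then for every u > 0, with probability at least 1 − e^{−u}, ‖g‖_n² ≤ (3/2) ‖g‖₂² + 2 ‖g‖_∞² u / n. -/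
open MeasureTheory
open scoped ENNReal

lemma aux_lintegral_pi_pow {X : Type*} [MeasurableSpace X] (P : Measure X) [SigmaFinite P]
    {f : X → ℝ≥0∞} (hf : Measurable f) :
    ∀ n : ℕ, ∫⁻ xs, ∏ i, f (xs i) ∂(Measure.pi fun _ : Fin n => P) = (∫⁻ x, f x ∂P) ^ n := by
  intro n
  induction n with
  | zero => simp [Measure.pi_empty_univ]
  | succ n ih =>
    have mp := (measurePreserving_piFinSuccAbove (fun _ : Fin (n + 1) => P) 0).symm
    have hmeas : Measurable fun xs : Fin (n + 1) → X => ∏ i, f (xs i) :=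
      Finset.measurable_prod _ fun i _ => hf.comp (measurable_pi_apply i)
    rw [← mp.lintegral_comp hmeas]
    simp only [MeasurableEquiv.piFinSuccAbove_symm_apply, Fin.insertNthEquiv,
      Fin.insertNth_zero, Equiv.coe_fn_mk, Fin.zero_succAbove, cast_eq,
      Fin.prod_univ_succ, Fin.cons_zero, Fin.cons_succ]
    have hg : Measurable fun xs : Fin n → X => ∏ i, f (xs i) :=
      Finset.measurable_prod _ fun i _ => hf.comp (measurable_pi_apply i)
    rw [MeasureTheory.lintegral_prod_mul (f := f)
      (g := fun xs : Fin n → X => ∏ i, f (xs i)) hf.aemeasurable hg.aemeasurable]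
    rw [ih, pow_succ]
    ring

lemma aux_exp_le {t : ℝ} (h0 : 0 ≤ t) (h1 : t ≤ 1 / 2) :
    Real.exp t ≤ 1 + t + t ^ 2 := by
  have h := Real.exp_bound' h0 (by linarith) (n := 3) (by norm_num)
  simp [Finset.sum_range_succ, Nat.factorial] at h
  nlinarith [sq_nonneg t, pow_le_pow_left₀ h0 h1 3]

/-- **Bernstein-type bound for the empirical `L²` norm.** Let `X₁, …, X_n` be i.i.d. with
law `P` (modeled by the product measure on `Fin n → X`) and let `g` be a bounded
measurable function with `|g| ≤ M` pointwise (`M` a bound for the sup norm `‖g‖_∞`) and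
population norm `‖g‖₂² = ∫ g² dP`.  Then for every `u > 0`, with probability at least
`1 − e^{−u}`, the empirical norm `‖g‖_n² = (1/n) ∑ g(Xᵢ)²` satisfies
`‖g‖_n² ≤ (3/2)‖g‖₂² + 2 M² u / n`. -/
theorem stmt_17 {X : Type*} [MeasurableSpace X]
    (P : Measure X) [IsProbabilityMeasure P]
    (g : X → ℝ) (hgm : Measurable g) (M : ℝ) (hM : ∀ x, |g x| ≤ M)
    (n : ℕ) (hn : 0 < n) (u : ℝ) (hu : 0 < u) :
    ENNReal.ofReal (1 - Real.exp (-u)) ≤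
      (Measure.pi fun _ : Fin n => P)
        {xs | (1 / (n : ℝ)) * ∑ i, g (xs i) ^ 2 ≤
          (3 / 2) * (∫ x, g x ^ 2 ∂P) + 2 * M ^ 2 * u / n} := by
  classical
  set μ := (Measure.pi fun _ : Fin n => P) with hμ
  haveI : IsProbabilityMeasure μ := by
    rw [hμ]; infer_instance
  set v := ∫ x, g x ^ 2 ∂P with hv
  -- nonempty X
  by_cases hX : Nonempty X
  swap
  · exfalso
    have h1 : P (Set.univ : Set X) = 1 := measure_univ
    rw [Set.univ_eq_empty_iff.mpr (not_nonempty_iff.mp hX)] at h1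
    simp at h1
  obtain ⟨x0⟩ := hX
  have hM0 : 0 ≤ M := le_trans (abs_nonneg _) (hM x0)
  have hofle1 : ENNReal.ofReal (1 - Real.exp (-u)) ≤ 1 := by
    apply ENNReal.ofReal_le_one.mpr
    have := Real.exp_pos (-u)
    linarith
  rcases eq_or_lt_of_le hM0 with hMeq | hMpos
  · -- M = 0 : g ≡ 0
    have hg0 : ∀ x, g x = 0 := fun x =>
      abs_nonpos_iff.mp (by rw [← hMeq] at hM; exact hM x)
    have hset : {xs : Fin n → X | (1 / (n : ℝ)) * ∑ i, g (xs i) ^ 2 ≤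
          (3 / 2) * v + 2 * M ^ 2 * u / n} = Set.univ := by
      ext xs
      simp only [Set.mem_setOf_eq, Set.mem_univ, iff_true]
      have hv0 : v = 0 := by
        rw [hv]
        simp [hg0]
      simp [hg0, hv0, ← hMeq]
    rw [hset]
    simpa using hofle1
  -- main case M > 0
  have hM2 : (0 : ℝ) < M ^ 2 := by positivity
  set l : ℝ := 1 / (2 * M ^ 2) with hl
  have hlpos : 0 < l := by positivity
  have hgb : ∀ x, g x ^ 2 ≤ M ^ 2 := fun x => by
    rw [← sq_abs]
    exact pow_le_pow_left₀ (abs_nonneg _) (hM x) 2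
  have hg2nn : ∀ x, 0 ≤ g x ^ 2 := fun x => sq_nonneg _
  have hlg : ∀ x, l * g x ^ 2 ≤ 1 / 2 := by
    intro x
    have : l * g x ^ 2 ≤ l * M ^ 2 := by
      apply mul_le_mul_of_nonneg_left (hgb x) hlpos.le
    rw [hl] at this ⊢
    calc 1 / (2 * M ^ 2) * g x ^ 2 ≤ 1 / (2 * M ^ 2) * M ^ 2 := this
    _ = 1 / 2 := by field_simp
  -- pointwise exponential bound
  have hkey : ∀ x, Real.exp (l * g x ^ 2) ≤ 1 + (l + l ^ 2 * M ^ 2) * g x ^ 2 := by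
    intro x
    have h1 : Real.exp (l * g x ^ 2) ≤ 1 + l * g x ^ 2 + (l * g x ^ 2) ^ 2 :=
      aux_exp_le (by positivity) (hlg x)
    have h2 : (l * g x ^ 2) ^ 2 ≤ l ^ 2 * M ^ 2 * g x ^ 2 := by
      have : (l * g x ^ 2) ^ 2 = l ^ 2 * g x ^ 2 * g x ^ 2 := by ring
      rw [this]
      have := mul_le_mul_of_nonneg_right (hgb x) (hg2nn x)
      nlinarith [sq_nonneg l, hg2nn x]
    linarith
  -- integrability
  have hg2m : Measurable fun x => g x ^ 2 := hgm.pow_const 2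
  have hg2int : Integrable (fun x => g x ^ 2) P := by
    apply (integrable_const (M ^ 2)).mono' hg2m.aestronglyMeasurable
    filter_upwards with x
    rw [Real.norm_eq_abs, abs_of_nonneg (hg2nn x)]
    exact hgb x
  have hexpm : Measurable fun x => Real.exp (l * g x ^ 2) :=
    (measurable_const.mul hg2m).exp
  have hexpint : Integrable (fun x => Real.exp (l * g x ^ 2)) P := by
    apply (integrable_const (Real.exp (1 / 2))).mono' hexpm.aestronglyMeasurable
    filter_upwards with x
    rw [Real.norm_eq_abs, abs_of_pos (Real.exp_pos _)]
    exact Real.exp_le_exp.mpr (hlg x)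
  have hvnn : 0 ≤ v := integral_nonneg hg2nn
  -- bound on the one-dimensional integral
  have hIb : ∫ x, Real.exp (l * g x ^ 2) ∂P ≤ Real.exp (3 / 2 * l * v) := by
    have h1 : ∫ x, Real.exp (l * g x ^ 2) ∂P ≤
        ∫ x, (1 + (l + l ^ 2 * M ^ 2) * g x ^ 2) ∂P := by
      apply integral_mono hexpint
      · exact (integrable_const 1).add (hg2int.const_mul _)
      · exact hkey
    have h2 : ∫ x, (1 + (l + l ^ 2 * M ^ 2) * g x ^ 2) ∂P
        = 1 + (l + l ^ 2 * M ^ 2) * v := by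
      rw [integral_add (integrable_const 1) (hg2int.const_mul _), integral_const,
        integral_const_mul]
      simp [hv]
    have h3 : l + l ^ 2 * M ^ 2 = 3 / 2 * l := by
      rw [hl]; field_simp; ring
    have h4 : 1 + 3 / 2 * l * v ≤ Real.exp (3 / 2 * l * v) := by
      have := Real.add_one_le_exp (3 / 2 * l * v)
      linarith
    rw [h3] at h1 h2
    linarith
  -- lintegral version
  set c : ℝ≥0∞ := ∫⁻ x, ENNReal.ofReal (Real.exp (l * g x ^ 2)) ∂P with hc
  have hceq : c = ENNReal.ofReal (∫ x, Real.exp (l * g x ^ 2) ∂P) := by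
    rw [hc, ← ofReal_integral_eq_lintegral_ofReal hexpint
      (ae_of_all _ fun x => (Real.exp_pos _).le)]
  have hcb : c ≤ ENNReal.ofReal (Real.exp (3 / 2 * l * v)) := by
    rw [hceq]; exact ENNReal.ofReal_le_ofReal hIb
  -- threshold
  set a : ℝ := 3 / 2 * (n : ℝ) * v + 2 * M ^ 2 * u with ha
  have hnpos : (0 : ℝ) < n := Nat.cast_pos.mpr hn
  -- the event
  set E : Set (Fin n → X) := {xs | (1 / (n : ℝ)) * ∑ i, g (xs i) ^ 2 ≤
      (3 / 2) * v + 2 * M ^ 2 * u / n} with hE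
  have hfm : Measurable fun xs : Fin n → X => (1 / (n : ℝ)) * ∑ i, g (xs i) ^ 2 :=
    measurable_const.mul (Finset.measurable_sum _ fun i _ =>
      (hgm.comp (measurable_pi_apply i)).pow_const 2)
  have hEm : MeasurableSet E := measurableSet_le hfm measurable_const
  -- complement bound
  have hsub : Eᶜ ⊆ {xs : Fin n → X | ENNReal.ofReal (Real.exp (l * a)) ≤
      ∏ i, ENNReal.ofReal (Real.exp (l * g (xs i) ^ 2))} := by
    intro xs hxs
    simp only [hE, Set.mem_compl_iff, Set.mem_setOf_eq, not_le] at hxs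
    have hS : a ≤ ∑ i, g (xs i) ^ 2 := by
      have h2 : (1 / (n : ℝ)) * ∑ i, g (xs i) ^ 2 = (∑ i, g (xs i) ^ 2) / n := by ring
      rw [h2, lt_div_iff₀ hnpos] at hxs
      have h3 : ((3 : ℝ) / 2 * v + 2 * M ^ 2 * u / n) * n = a := by
        rw [ha]; field_simp
      exact (h3 ▸ hxs).le
    have hprod : ∏ i, ENNReal.ofReal (Real.exp (l * g (xs i) ^ 2)) =
        ENNReal.ofReal (Real.exp (l * ∑ i, g (xs i) ^ 2)) := by
      rw [← ENNReal.ofReal_prod_of_nonneg (fun i _ => (Real.exp_pos _).le)]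
      congr 1
      rw [← Real.exp_sum, Finset.mul_sum]
    simp only [Set.mem_setOf_eq, hprod]
    apply ENNReal.ofReal_le_ofReal
    apply Real.exp_le_exp.mpr
    exact mul_le_mul_of_nonneg_left hS hlpos.le
  have hprodm : Measurable fun xs : Fin n → X =>
      ∏ i, ENNReal.ofReal (Real.exp (l * g (xs i) ^ 2)) :=
    Finset.measurable_prod _ fun i _ =>
      ((hexpm.comp (measurable_pi_apply i))).ennreal_ofReal
  have hεne : ENNReal.ofReal (Real.exp (l * a)) ≠ 0 := by
    simp [ENNReal.ofReal_eq_zero, not_le, Real.exp_pos]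
  have hεtop : ENNReal.ofReal (Real.exp (l * a)) ≠ ⊤ := ENNReal.ofReal_ne_top
  have hmarkov : μ Eᶜ ≤ (∫⁻ xs, ∏ i, ENNReal.ofReal (Real.exp (l * g (xs i) ^ 2)) ∂μ) /
      ENNReal.ofReal (Real.exp (l * a)) := by
    refine le_trans (measure_mono hsub) ?_
    exact meas_ge_le_lintegral_div hprodm.aemeasurable hεne hεtop
  have hlint : (∫⁻ xs, ∏ i, ENNReal.ofReal (Real.exp (l * g (xs i) ^ 2)) ∂μ) = c ^ n := by
    rw [hμ, hc]
    exact aux_lintegral_pi_pow P hexpm.ennreal_ofReal n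
  have hfinal : μ Eᶜ ≤ ENNReal.ofReal (Real.exp (-u)) := by
    refine hmarkov.trans ?_
    rw [hlint]
    have h1 : c ^ n ≤ ENNReal.ofReal (Real.exp (3 / 2 * l * v)) ^ n :=
      pow_le_pow_left' hcb n
    have h2 : ENNReal.ofReal (Real.exp (3 / 2 * l * v)) ^ n =
        ENNReal.ofReal (Real.exp ((n : ℝ) * (3 / 2 * l * v))) := by
      rw [← ENNReal.ofReal_pow (Real.exp_pos _).le, ← Real.exp_nat_mul]
    have h3 : c ^ n / ENNReal.ofReal (Real.exp (l * a)) ≤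
        ENNReal.ofReal (Real.exp ((n : ℝ) * (3 / 2 * l * v))) /
          ENNReal.ofReal (Real.exp (l * a)) := by
      apply ENNReal.div_le_div_right
      rw [← h2]; exact h1
    refine h3.trans ?_
    rw [← ENNReal.ofReal_div_of_pos (Real.exp_pos _), ← Real.exp_sub]
    apply ENNReal.ofReal_le_ofReal
    apply Real.exp_le_exp.mpr
    have hexp : (n : ℝ) * (3 / 2 * l * v) - l * a = -u := by
      rw [ha, hl]
      field_simp
      ring
    rw [hexp]
  -- conclude
  have hcompl : μ Eᶜ = 1 - μ E := prob_compl_eq_one_sub hEm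
  have hμE : ENNReal.ofReal (1 - Real.exp (-u)) ≤ μ E := by
    have h1 : ENNReal.ofReal (1 - Real.exp (-u)) =
        1 - ENNReal.ofReal (Real.exp (-u)) := by
      rw [ENNReal.ofReal_sub _ (Real.exp_pos _).le, ENNReal.ofReal_one]
    rw [h1]
    have h2 : (1 : ℝ≥0∞) - ENNReal.ofReal (Real.exp (-u)) ≤ 1 - μ Eᶜ :=
      tsub_le_tsub_left hfinal 1
    refine h2.trans ?_
    rw [hcompl, ENNReal.sub_sub_cancel ENNReal.one_ne_top prob_le_one]
  exact hμE
end
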